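/- arXiv:1511.00649 — 5 statements merged into one kernel-verified Lean document; each statement's English description precedes it below -/
import Mathlib

section
/- Let A = (A1 A2) ∈ ℝ^{m×n} with A1 ∈ ℝ^{m×k}, A2 ∈ ℝ^{m×(n−k)}, let k = rank(A1), and let r be an integer with k ≤ r ≤ min{m,n}. Then the matrix Ã2 = P_{A1}(A2) + H_{r−k}(P⊥_{A1}(A2)) satisfies rank(A1 Ã2) ≤ r and ‖A2 − Ã2‖_F ≤ ‖A2 − X2‖_F for every X2 ∈ ℝ^{m×(n−k)} with rank(A1 X2) ≤ r; that is, (A1 Ã2) solves the constrained low rank approximation problem min{‖(A1 A2) − (A1 X2)‖_F² : rank(A1 X2) ≤ r}. -/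
open Matrix Filter Topology

noncomputable def frob {α β : Type*} [Fintype α] [Fintype β] (M : Matrix α β ℝ) : ℝ :=
  Real.sqrt (∑ i, ∑ j, (M i j) ^ 2)

noncomputable def projCol {m k : ℕ} (B : Matrix (Fin m) (Fin k) ℝ) :
    Matrix (Fin m) (Fin m) ℝ :=
  B * (Bᵀ * B)⁻¹ * Bᵀ

/-- The `p × q` diagonal matrix whose `(i,i)` entry is the `(i+1)`-st value of `σ`
(singular values are indexed starting from `1`, as in the paper). -/
def svdDiag (p q : ℕ) (σ : ℕ → ℝ) : Matrix (Fin p) (Fin q) ℝ :=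
  Matrix.of fun i j => if (i : ℕ) = (j : ℕ) then σ ((i : ℕ) + 1) else 0

/-- `svdDiag` truncated to its `r` leading (largest) singular values. -/
def svdTrunc (p q r : ℕ) (σ : ℕ → ℝ) : Matrix (Fin p) (Fin q) ℝ :=
  Matrix.of fun i j => if (i : ℕ) = (j : ℕ) ∧ (i : ℕ) < r then σ ((i : ℕ) + 1) else 0

/-- `M = U * Σ * Vᵀ` is a singular value decomposition of `M`, with singular values
`σ 1 ≥ σ 2 ≥ ⋯ ≥ 0` arranged in non-increasing order. -/
structure IsSVD {p q : ℕ} (M : Matrix (Fin p) (Fin q) ℝ)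
    (U : Matrix (Fin p) (Fin p) ℝ) (σ : ℕ → ℝ) (V : Matrix (Fin q) (Fin q) ℝ) : Prop where
  hUl : Uᵀ * U = 1
  hUr : U * Uᵀ = 1
  hVl : Vᵀ * V = 1
  hVr : V * Vᵀ = 1
  hM : M = U * svdDiag p q σ * Vᵀ
  anti : ∀ i j : ℕ, 1 ≤ i → i ≤ j → σ j ≤ σ i
  nonneg : ∀ i : ℕ, 1 ≤ i → 0 ≤ σ i

/-!
Let `P` be the orthogonal projection onto the column space of `A1` and `Q = I - P`. Then
`‖A2 - X2‖² = ‖P (A2 - X2)‖² + ‖Q (A2 - X2)‖²`, and since `range A1 ⊆ ker Q`, the constraint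
`rank (A1 X2) ≤ r` forces `rank (Q X2) ≤ r - k`. As `A2 - Ã2 = Q A2 - H_{r-k}(Q A2)`, everything
reduces to the Eckart–Young theorem for `Q A2 = U Σ Vᵀ`, i.e. for the diagonal `Σ`. For that, let
`R` be the orthogonal projection onto `ker Z`, where `rank Z ≤ s`: then
`‖Σ - Z‖² ≥ ‖(Σ - Z) R‖² = ‖Σ R‖² = ∑ σⱼ² Rⱼⱼ` with `0 ≤ Rⱼⱼ ≤ 1` and `∑ Rⱼⱼ = dim ker Z ≥ q - s`,
and such a weighted sum of the nonincreasing `σⱼ²` is at least the tail `∑_{j > s} σⱼ²`.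
-/

noncomputable def frobSq {m n : Type*} [Fintype m] [Fintype n] (M : Matrix m n ℝ) : ℝ :=
  ∑ i, ∑ j, M i j ^ 2

section Frobenius

variable {m n o : Type*} [Fintype m] [Fintype n] [Fintype o]

lemma frob_le_frob_of_frobSq_le {M N : Matrix m n ℝ} (h : frobSq M ≤ frobSq N) :
    frob M ≤ frob N :=
  Real.sqrt_le_sqrt h

lemma frobSq_nonneg (M : Matrix m n ℝ) : 0 ≤ frobSq M := by
  unfold frobSq; positivity

lemma frobSq_eq_trace (M : Matrix m n ℝ) : frobSq M = trace (Mᵀ * M) := by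
  rw [frobSq, trace, Finset.sum_comm]
  simp [mul_apply, sq]

lemma frobSq_transpose (M : Matrix m n ℝ) : frobSq Mᵀ = frobSq M := by
  rw [frobSq, frobSq, Finset.sum_comm]
  rfl

lemma frobSq_orthogonal_mul [DecidableEq m] {U : Matrix o m ℝ} (hU : Uᵀ * U = 1)
    (M : Matrix m n ℝ) :
    frobSq (U * M) = frobSq M := by
  rw [frobSq_eq_trace, frobSq_eq_trace, transpose_mul, Matrix.mul_assoc, ← Matrix.mul_assoc Uᵀ,
    hU, Matrix.one_mul]

lemma frobSq_mul_orthogonal_transpose [DecidableEq n] {V : Matrix o n ℝ} (hV : Vᵀ * V = 1)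
    (M : Matrix m n ℝ) :
    frobSq (M * Vᵀ) = frobSq M := by
  rw [← frobSq_transpose, transpose_mul, transpose_transpose, frobSq_orthogonal_mul hV,
    frobSq_transpose]

lemma transpose_eq_of_isStarProjection {P : Matrix n n ℝ} (hP : IsStarProjection P) : Pᵀ = P := by
  simpa [star_eq_conjTranspose, conjTranspose_eq_transpose_of_trivial]
    using hP.isSelfAdjoint.star_eq

lemma isStarProjection_of_transpose_eq {P : Matrix n n ℝ} (hPt : Pᵀ = P) (hPP : P * P = P) :
    IsStarProjection P :=
  isStarProjection_iff'.2
    ⟨hPP, by rwa [star_eq_conjTranspose, conjTranspose_eq_transpose_of_trivial]⟩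

lemma diag_mem_Icc_of_isStarProjection {P : Matrix n n ℝ} (hP : IsStarProjection P) (j : n) :
    P j j ∈ Set.Icc 0 1 := by
  have hPt := transpose_eq_of_isStarProjection hP
  have hPtP : Pᵀ * P = P := by rw [hPt, hP.isIdempotentElem.eq]
  have hsq : P j j = ∑ i, P i j ^ 2 := by
    conv_lhs => rw [← hPtP]
    simp [mul_apply, sq]
  have hle : P j j ^ 2 ≤ P j j :=
    hsq ▸ Finset.single_le_sum (fun i _ => sq_nonneg (P i j)) (Finset.mem_univ j)
  have h0 : 0 ≤ P j j := hsq ▸ Finset.sum_nonneg fun i _ => sq_nonneg _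
  exact ⟨h0, by nlinarith⟩

lemma isStarProjection_mul_transpose {W : Matrix n o ℝ} [DecidableEq o] (hW : Wᵀ * W = 1) :
    IsStarProjection (W * Wᵀ) :=
  isStarProjection_of_transpose_eq (by rw [transpose_mul, transpose_transpose])
    (by rw [Matrix.mul_assoc, ← Matrix.mul_assoc Wᵀ, hW, Matrix.one_mul])

variable [DecidableEq n]

lemma frobSq_eq_frobSq_mul_add {P : Matrix n n ℝ} (hP : IsStarProjection P) (C : Matrix n o ℝ) :
    frobSq C = frobSq (P * C) + frobSq ((1 - P) * C) := by
  have hPt := transpose_eq_of_isStarProjection hP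
  have hQt := transpose_eq_of_isStarProjection hP.one_sub
  rw [frobSq_eq_trace, frobSq_eq_trace, frobSq_eq_trace, ← trace_add, transpose_mul, transpose_mul,
    hPt, hQt, Matrix.mul_assoc, Matrix.mul_assoc, ← Matrix.mul_assoc P, ← Matrix.mul_assoc (1 - P),
    hP.isIdempotentElem.eq, hP.one_sub.isIdempotentElem.eq, ← Matrix.mul_add, ← Matrix.add_mul,
    add_sub_cancel, Matrix.one_mul]

lemma frobSq_isStarProjection_mul_le {P : Matrix n n ℝ} (hP : IsStarProjection P)
    (C : Matrix n o ℝ) : frobSq (P * C) ≤ frobSq C := by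
  rw [frobSq_eq_frobSq_mul_add hP C]
  linarith [frobSq_nonneg ((1 - P) * C)]

lemma frobSq_mul_isStarProjection_le {P : Matrix n n ℝ} (hP : IsStarProjection P)
    (C : Matrix m n ℝ) : frobSq (C * P) ≤ frobSq C := by
  rw [← frobSq_transpose, transpose_mul, transpose_eq_of_isStarProjection hP, ← frobSq_transpose C]
  exact frobSq_isStarProjection_mul_le hP Cᵀ

lemma frobSq_mul_isStarProjection_eq_sum {M : Matrix m n ℝ} {d : n → ℝ}
    (hM : Mᵀ * M = diagonal d) {P : Matrix n n ℝ} (hP : IsStarProjection P) :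
    frobSq (M * P) = ∑ j, d j * P j j := by
  have hPMMP : P * Mᵀ * (M * P) = P * (diagonal d * P) := by
    rw [← hM]; simp only [Matrix.mul_assoc]
  rw [frobSq_eq_trace, transpose_mul, transpose_eq_of_isStarProjection hP, hPMMP, trace_mul_comm,
    Matrix.mul_assoc, hP.isIdempotentElem.eq]
  simp [trace, diagonal_mul]

end Frobenius

namespace Matrix

variable {m n o : Type*} [Fintype n] [Fintype o]

theorem rank_add_le (A B : Matrix m n ℝ) : (A + B).rank ≤ A.rank + B.rank := by
  have hle : LinearMap.range (A + B).mulVecLin ≤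
      LinearMap.range A.mulVecLin ⊔ LinearMap.range B.mulVecLin := by
    rintro x ⟨v, rfl⟩
    exact Submodule.mem_sup.2 ⟨A *ᵥ v, ⟨v, rfl⟩, B *ᵥ v, ⟨v, rfl⟩, by simp⟩
  exact (Submodule.finrank_mono hle).trans (Submodule.finrank_add_le_finrank_add_finrank _ _)

theorem rank_fromCols_zero_left [DecidableEq n] (B : Matrix m n ℝ) :
    (fromCols (0 : Matrix m o ℝ) B).rank = B.rank := by
  refine le_antisymm ?_ ?_
  · have h : fromCols (0 : Matrix m o ℝ) B = B * fromCols (0 : Matrix n o ℝ) 1 := by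
      rw [mul_fromCols, Matrix.mul_zero, Matrix.mul_one]
    exact h ▸ rank_mul_le_left _ _
  · have h : B =
        fromCols (0 : Matrix m o ℝ) B * fromRows (0 : Matrix o n ℝ) (1 : Matrix n n ℝ) := by
      rw [fromCols_mul_fromRows, Matrix.zero_mul, Matrix.mul_one, zero_add]
    conv_lhs => rw [h]
    exact rank_mul_le_left _ _

theorem rank_fromCols_mul_add_le [DecidableEq n] [DecidableEq o] (A : Matrix m o ℝ)
    (G : Matrix o n ℝ) (B : Matrix m n ℝ) :
    (fromCols A (A * G + B)).rank ≤ A.rank + B.rank := by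
  have h : fromCols A (A * G + B) = A * fromCols (1 : Matrix o o ℝ) G + fromCols 0 B := by
    rw [mul_fromCols, Matrix.mul_one]
    ext i (j | j) <;> simp
  rw [h, ← rank_fromCols_zero_left (o := o) B]
  exact (rank_add_le _ _).trans (Nat.add_le_add_right (rank_mul_le_left _ _) _)

/-- Since `range A ⊆ ker Q`, multiplying by `Q` collapses at least `rank A` dimensions of the
column space of `(A X)`. -/
theorem rank_add_rank_mul_le_rank_fromCols [Fintype m] [DecidableEq n] [DecidableEq o]
    {A : Matrix m o ℝ} {Q : Matrix m m ℝ} (hQA : Q * A = 0) (X : Matrix m n ℝ) :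
    A.rank + (Q * X).rank ≤ (fromCols A X).rank := by
  set W := LinearMap.range (fromCols A X).mulVecLin
  set f := Q.mulVecLin
  have hA : LinearMap.range A.mulVecLin ≤ W ⊓ LinearMap.ker f := by
    refine le_inf ?_ ?_
    · have h : A = fromCols A X * fromRows (1 : Matrix o o ℝ) (0 : Matrix n o ℝ) := by
        rw [fromCols_mul_fromRows, Matrix.mul_one, Matrix.mul_zero, add_zero]
      rw [h, mulVecLin_mul]
      exact LinearMap.range_comp_le_range _ _
    · rintro _ ⟨v, rfl⟩
      simp [f, mulVec_mulVec, hQA]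
  have hQX : (Q * X).rank = Module.finrank ℝ (W.map f) := by
    rw [← rank_fromCols_zero_left (o := o), ← hQA, ← mul_fromCols, rank, mulVecLin_mul,
      LinearMap.range_comp]
  have hker : Module.finrank ℝ (LinearMap.ker (f.domRestrict W))
      = Module.finrank ℝ ↥(W ⊓ LinearMap.ker f) := by
    have h : (LinearMap.ker f).comap W.subtype = (W ⊓ LinearMap.ker f).comap W.subtype := by
      ext x; simp
    rw [LinearMap.ker_domRestrict, h]
    exact (Submodule.comapSubtypeEquivOfLe inf_le_left).finrank_eq
  have hrankNullity := LinearMap.finrank_range_add_finrank_ker (f.domRestrict W)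
  rw [LinearMap.range_domRestrict, hker] at hrankNullity
  have hAle := Submodule.finrank_mono hA
  rw [hQX]
  change Module.finrank ℝ (LinearMap.range A.mulVecLin) + _ ≤ Module.finrank ℝ W
  omega

end Matrix

section ProjCol

variable {m k : ℕ} {A : Matrix (Fin m) (Fin k) ℝ}

lemma projCol_mul {l : ℕ} (X : Matrix (Fin m) (Fin l) ℝ) :
    projCol A * X = A * ((Aᵀ * A)⁻¹ * (Aᵀ * X)) := by
  simp only [projCol, Matrix.mul_assoc]

lemma isUnit_transpose_mul_self (hA : A.rank = k) : IsUnit (Aᵀ * A) := by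
  rw [← mulVec_surjective_iff_isUnit]
  have htop : LinearMap.range (Aᵀ * A).mulVecLin = ⊤ :=
    Submodule.eq_top_of_finrank_eq (by rw [← rank, rank_transpose_mul_self, hA]; simp)
  exact LinearMap.range_eq_top.1 htop

lemma projCol_mul_self (hA : A.rank = k) : projCol A * A = A := by
  rw [projCol_mul, nonsing_inv_mul _ ((isUnit_transpose_mul_self hA).map detMonoidHom),
    Matrix.mul_one]

lemma isStarProjection_projCol (hA : A.rank = k) : IsStarProjection (projCol A) := by
  have hsymm : (projCol A)ᵀ = projCol A := by
    rw [projCol, transpose_mul, transpose_mul, transpose_transpose, transpose_nonsing_inv,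
      transpose_mul, transpose_transpose, Matrix.mul_assoc]
  have hAP : Aᵀ * projCol A = Aᵀ := by
    rw [← hsymm, ← transpose_mul, projCol_mul_self hA]
  refine isStarProjection_of_transpose_eq hsymm ?_
  rw [projCol_mul, hAP, projCol, Matrix.mul_assoc]

end ProjCol

lemma exists_orthonormal_cols_mul_eq_zero {m n : Type*} [Fintype m] [Fintype n] [DecidableEq n]
    (Z : Matrix m n ℝ) :
    ∃ (t : ℕ) (W : Matrix n (Fin t) ℝ), Wᵀ * W = 1 ∧ Z * W = 0 ∧ Z.rank + t = Fintype.card n := by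
  set K := LinearMap.ker (toEuclideanLin Z)
  set b := stdOrthonormalBasis ℝ K
  refine ⟨Module.finrank ℝ K, of fun i a => (b a : EuclideanSpace ℝ n) i, ?_, ?_, ?_⟩
  · ext a c
    have h := orthonormal_iff_ite.1 b.orthonormal a c
    rw [Submodule.coe_inner, PiLp.inner_apply] at h
    simp only [RCLike.inner_apply, conj_trivial] at h
    simp only [mul_apply, transpose_apply, of_apply, one_apply, ← h]
    exact Finset.sum_congr rfl fun _ _ => mul_comm _ _
  · ext i a
    have h : toEuclideanLin Z (b a : EuclideanSpace ℝ n) = 0 := (b a).2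
    have h' : Z *ᵥ (fun j => (b a : EuclideanSpace ℝ n) j) = 0 := congrArg WithLp.ofLp h
    simpa [mul_apply, mulVec, dotProduct] using congrFun h' i
  · have h := LinearMap.finrank_range_add_finrank_ker (toEuclideanLin Z)
    rw [finrank_euclideanSpace] at h
    rw [← h, rank_eq_finrank_range_toLin Z (EuclideanSpace.basisFun m ℝ).toBasis
      (EuclideanSpace.basisFun n ℝ).toBasis]
    rfl

lemma sum_fin_ite_val_eq {p : ℕ} (t : ℕ) (c : ℝ) :
    ∑ a : Fin p, (if (a : ℕ) = t then c else 0) = if t < p then c else 0 := by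
  rw [Fin.sum_univ_eq_sum_range (fun a => if a = t then c else 0), Finset.sum_ite_eq']
  simp

section SVD

variable {p q : ℕ}

lemma svdDiag_transpose_mul_self (σ : ℕ → ℝ) :
    (svdDiag p q σ)ᵀ * svdDiag p q σ =
      diagonal fun j : Fin q => if (j : ℕ) < p then σ (j + 1) ^ 2 else 0 := by
  ext i j
  have h : ∀ a : Fin p,
      (if (a : ℕ) = i then σ (a + 1) else 0) * (if (a : ℕ) = j then σ (a + 1) else 0)
        = if (a : ℕ) = i then (if i = j then σ (i + 1) ^ 2 else 0) else 0 := by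
    intro a
    by_cases hai : (a : ℕ) = i <;> by_cases hij : i = j <;> simp_all [sq, Fin.ext_iff]
  simp only [mul_apply, transpose_apply, svdDiag, of_apply, diagonal_apply, h, sum_fin_ite_val_eq]
  split_ifs <;> rfl

lemma svdTrunc_eq_svdDiag_mul (s : ℕ) (σ : ℕ → ℝ) :
    svdTrunc p q s σ =
      svdDiag p q σ * diagonal fun j : Fin q => if (j : ℕ) < s then (1 : ℝ) else 0 := by
  ext i j
  by_cases h : (i : ℕ) = j <;> simp [svdTrunc, svdDiag, mul_diagonal, h]

lemma rank_svdTrunc_le (s : ℕ) (σ : ℕ → ℝ) : (svdTrunc p q s σ).rank ≤ s := by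
  refine (rank_le_card_of_support_subset _ {i : Fin p | (i : ℕ) < s} fun i hi => ?_).trans ?_
  · by_contra h
    exact hi (funext fun j => if_neg fun hij => h (by simpa using hij.2))
  · rw [Fin.card_filter_val_lt]
    exact min_le_right _ _

end SVD

lemma sum_mul_one_sub_indicator_le {q s : ℕ} {d p : Fin q → ℝ} (hd : Antitone d) (hd0 : 0 ≤ d)
    (hp : ∀ j, p j ∈ Set.Icc 0 1) (hps : (q : ℝ) ≤ s + ∑ j, p j) :
    ∑ j, d j * (1 - if (j : ℕ) < s then 1 else 0) ≤ ∑ j, d j * p j := by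
  by_cases hsq : s < q
  · -- compare termwise against the threshold `c = d s`
    set c := d ⟨s, hsq⟩
    have hterm : ∀ j, 0 ≤ (d j - c) * (p j - (1 - if (j : ℕ) < s then 1 else 0)) := by
      intro j
      by_cases hj : (j : ℕ) < s
      · simp only [hj, if_true, sub_self, sub_zero]
        exact mul_nonneg (sub_nonneg.2 (hd (Fin.le_def.2 hj.le))) (hp j).1
      · simp only [hj, if_false, sub_zero]
        exact mul_nonneg_of_nonpos_of_nonpos (sub_nonpos.2 (hd (Fin.le_def.2 (not_lt.1 hj))))
          (sub_nonpos.2 (hp j).2)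
    have hcount : ∑ j : Fin q, (if (j : ℕ) < s then (1 : ℝ) else 0) = s := by
      rw [Finset.sum_boole, Fin.card_filter_val_lt, min_eq_right hsq.le]
    have hsum := Finset.sum_nonneg fun j (_ : j ∈ Finset.univ) => hterm j
    simp only [sub_mul, mul_sub, Finset.sum_sub_distrib, mul_one, ← Finset.mul_sum, hcount,
      Finset.sum_const, Finset.card_univ, Fintype.card_fin, nsmul_eq_mul] at hsum
    have hmass := mul_nonneg (hd0 ⟨s, hsq⟩) (sub_nonneg.2 hps)
    simp only [mul_sub, mul_one, Finset.sum_sub_distrib]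
    linarith
  · have h1 : ∀ j : Fin q, (j : ℕ) < s := fun j => j.2.trans_le (not_lt.1 hsq)
    simp only [h1, if_true, sub_self, mul_zero, Finset.sum_const_zero]
    exact Finset.sum_nonneg fun j _ => mul_nonneg (hd0 j) (hp j).1

section EckartYoung

variable {p q : ℕ} {σ : ℕ → ℝ}

lemma antitone_svdDiag_sq (hanti : ∀ i j : ℕ, 1 ≤ i → i ≤ j → σ j ≤ σ i)
    (hnn : ∀ i : ℕ, 1 ≤ i → 0 ≤ σ i) :
    Antitone fun j : Fin q => if (j : ℕ) < p then σ (j + 1) ^ 2 else 0 := by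
  intro i j hij
  have hij : (i : ℕ) ≤ j := hij
  dsimp only
  split_ifs with hj hi hi
  · exact pow_le_pow_left₀ (hnn _ (by omega)) (hanti _ _ (by omega) (by omega)) 2
  · omega
  · positivity
  · rfl

theorem frobSq_svdDiag_sub_svdTrunc_le (hanti : ∀ i j : ℕ, 1 ≤ i → i ≤ j → σ j ≤ σ i)
    (hnn : ∀ i : ℕ, 1 ≤ i → 0 ≤ σ i) (s : ℕ) {Z : Matrix (Fin p) (Fin q) ℝ} (hZ : Z.rank ≤ s) :
    frobSq (svdDiag p q σ - svdTrunc p q s σ) ≤ frobSq (svdDiag p q σ - Z) := by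
  set D := svdDiag p q σ
  set d : Fin q → ℝ := fun j => if (j : ℕ) < p then σ (j + 1) ^ 2 else 0
  set f : Fin q → ℝ := fun j => if (j : ℕ) < s then 1 else 0
  have hD : Dᵀ * D = diagonal d := svdDiag_transpose_mul_self σ
  have hE : IsStarProjection (1 - diagonal f) := by
    refine (isStarProjection_of_transpose_eq (diagonal_transpose f) ?_).one_sub
    rw [diagonal_mul_diagonal]
    congr 1
    ext j
    by_cases hj : (j : ℕ) < s <;> simp [f, hj]
  obtain ⟨t, W, hWW, hZW, hrank⟩ := exists_orthonormal_cols_mul_eq_zero Z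
  have hR := isStarProjection_mul_transpose hWW
  have hmass : (q : ℝ) ≤ s + ∑ j, (W * Wᵀ) j j := by
    have htr : ∑ j, (W * Wᵀ) j j = t := by
      change trace (W * Wᵀ) = t
      rw [trace_mul_comm, hWW, trace_one, Fintype.card_fin]
    rw [Fintype.card_fin] at hrank
    rw [htr]
    exact_mod_cast (by omega : q ≤ s + t)
  calc frobSq (D - svdTrunc p q s σ) = frobSq (D * (1 - diagonal f)) := by
        rw [svdTrunc_eq_svdDiag_mul, Matrix.mul_sub, Matrix.mul_one]
    _ = ∑ j, d j * (1 - f j) := by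
        rw [frobSq_mul_isStarProjection_eq_sum hD hE]
        simp [Matrix.sub_apply]
    _ ≤ ∑ j, d j * (W * Wᵀ) j j :=
        sum_mul_one_sub_indicator_le (antitone_svdDiag_sq hanti hnn)
          (fun j => by dsimp only [d]; split_ifs <;> positivity)
          (diag_mem_Icc_of_isStarProjection hR) hmass
    _ = frobSq (D * (W * Wᵀ)) := (frobSq_mul_isStarProjection_eq_sum hD hR).symm
    _ = frobSq ((D - Z) * (W * Wᵀ)) := by
        rw [Matrix.sub_mul, ← Matrix.mul_assoc Z, hZW, Matrix.zero_mul, sub_zero]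
    _ ≤ frobSq (D - Z) := frobSq_mul_isStarProjection_le hR _

theorem IsSVD.frobSq_sub_svdTrunc_le {B : Matrix (Fin p) (Fin q) ℝ} {U : Matrix (Fin p) (Fin p) ℝ}
    {V : Matrix (Fin q) (Fin q) ℝ} (h : IsSVD B U σ V) (s : ℕ) {Y : Matrix (Fin p) (Fin q) ℝ}
    (hY : Y.rank ≤ s) : frobSq (B - U * svdTrunc p q s σ * Vᵀ) ≤ frobSq (B - Y) := by
  set Z := Uᵀ * Y * V
  have hZ : Z.rank ≤ s := ((rank_mul_le_left _ _).trans (rank_mul_le_right _ _)).trans hY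
  have hYZ : Y = U * Z * Vᵀ := by
    simp only [Z, Matrix.mul_assoc, h.hVr, Matrix.mul_one]
    rw [← Matrix.mul_assoc, h.hUr, Matrix.one_mul]
  rw [hYZ, h.hM, ← Matrix.sub_mul, ← Matrix.mul_sub, ← Matrix.sub_mul, ← Matrix.mul_sub,
    frobSq_mul_orthogonal_transpose h.hVl, frobSq_orthogonal_mul h.hUl,
    frobSq_mul_orthogonal_transpose h.hVl, frobSq_orthogonal_mul h.hUl]
  exact frobSq_svdDiag_sub_svdTrunc_le h.anti h.nonneg s hZ

end EckartYoung

theorem stmt_0_general {m k l : ℕ}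
    (A1 : Matrix (Fin m) (Fin k) ℝ) (A2 : Matrix (Fin m) (Fin l) ℝ)
    (r : ℕ) (hrank : A1.rank = k) (hkr : k ≤ r)
    (U : Matrix (Fin m) (Fin m) ℝ) (σ : ℕ → ℝ) (V : Matrix (Fin l) (Fin l) ℝ)
    (hsvd : IsSVD ((1 - projCol A1) * A2) U σ V)
    (A2t : Matrix (Fin m) (Fin l) ℝ)
    (hA2t : A2t = projCol A1 * A2 + U * svdTrunc m l (r - k) σ * Vᵀ) :
    (Matrix.fromCols A1 A2t).rank ≤ r ∧
    ∀ X2 : Matrix (Fin m) (Fin l) ℝ, (Matrix.fromCols A1 X2).rank ≤ r →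
      frob (A2 - A2t) ≤ frob (A2 - X2) := by
  set Q := 1 - projCol A1
  have hQA1 : Q * A1 = 0 := by rw [Matrix.sub_mul, Matrix.one_mul, projCol_mul_self hrank, sub_self]
  refine ⟨?_, fun X2 hX2 => frob_le_frob_of_frobSq_le ?_⟩
  · calc (fromCols A1 A2t).rank ≤ A1.rank + (U * svdTrunc m l (r - k) σ * Vᵀ).rank := by
          rw [hA2t, projCol_mul]
          exact rank_fromCols_mul_add_le _ _ _
      _ ≤ k + (r - k) := by
          refine Nat.add_le_add hrank.le ?_
          exact (rank_mul_le_left _ _).trans ((rank_mul_le_right _ _).trans (rank_svdTrunc_le _ _))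
      _ = r := by omega
  · have hQX2 : (Q * X2).rank ≤ r - k := by
      have := rank_add_rank_mul_le_rank_fromCols hQA1 X2
      omega
    have hres : A2 - A2t = Q * A2 - U * svdTrunc m l (r - k) σ * Vᵀ := by
      rw [hA2t, Matrix.sub_mul, Matrix.one_mul]
      abel
    calc frobSq (A2 - A2t) ≤ frobSq (Q * A2 - Q * X2) := by
          rw [hres]
          exact hsvd.frobSq_sub_svdTrunc_le _ hQX2
      _ = frobSq (Q * (A2 - X2)) := by rw [Matrix.mul_sub]
      _ ≤ frobSq (A2 - X2) :=
          frobSq_isStarProjection_mul_le (isStarProjection_projCol hrank).one_sub _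

/-- **Golub–Hoffman–Stewart theorem.** Let `A = (A1 A2)` with `k = rank A1` and
`k ≤ r ≤ min {m, n}`.  Then `Ã2 = P_{A1}(A2) + H_{r-k}(P⊥_{A1}(A2))` satisfies
`rank (A1 Ã2) ≤ r` and `‖A2 − Ã2‖_F ≤ ‖A2 − X2‖_F` for every `X2` with
`rank (A1 X2) ≤ r`. -/
theorem stmt_0 {m k l : ℕ}
    (A1 : Matrix (Fin m) (Fin k) ℝ) (A2 : Matrix (Fin m) (Fin l) ℝ)
    (r : ℕ) (hrank : A1.rank = k) (hkr : k ≤ r) (hrmn : r ≤ min m (k + l))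
    (U : Matrix (Fin m) (Fin m) ℝ) (σ : ℕ → ℝ) (V : Matrix (Fin l) (Fin l) ℝ)
    (hsvd : IsSVD ((1 - projCol A1) * A2) U σ V)
    (A2t : Matrix (Fin m) (Fin l) ℝ)
    (hA2t : A2t = projCol A1 * A2 + U * svdTrunc m l (r - k) σ * Vᵀ) :
    (Matrix.fromCols A1 A2t).rank ≤ r ∧
    ∀ X2 : Matrix (Fin m) (Fin l) ℝ, (Matrix.fromCols A1 X2).rank ≤ r →
      frob (A2 - A2t) ≤ frob (A2 - X2) :=
  stmt_0_general A1 A2 r hrank hkr U σ V hsvd A2t hA2t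
end

section
/- Let A = (A1 A2) ∈ ℝ^{m×n} with A1 ∈ ℝ^{m×k} of full rank k, and let τ > 0. For weight matrices W = (W1 W2) with W1 ∈ ℝ^{m×k}, W2 ∈ ℝ^{m×(n−k)}, let (X̂1(W) X̂2(W)) be a minimizer of ‖((A1 A2) − (X1 X2)) ⊙ (W1 W2)‖_F² + τ·rank(X1 X2) over all (X1 X2) ∈ ℝ^{m×n}. Then the family {(X̂1(W) X̂2(W))} is bounded as (W1)_{ij} → ∞ and (W2)_{ij} → 1, and every accumulation point of (X̂1(W) X̂2(W)) in this limit belongs to the union over 0 ≤ r ≤ min{m,n} of the solution sets 𝒜_G^r of the Golub–Hoffman–Stewart problems; in particular every accumulation point has the form (A1, P_{A1}(A2) + H_{r−k}(P⊥_{A1}(A2))) for some r. -/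
/-
Comparing a minimizer with `(A1 A2)` itself bounds its weighted residual by
`τ · rank (A1 A2)`. As the weights `W2` stay away from `0` and the weights `W1` blow up, the
minimizers stay bounded and their first block converges to `A1`. At an accumulation point `L`,
lower semicontinuity of the rank (linearly independent columns stay independent nearby) gives
`rank L ≤ rank (X1 X2)` eventually, so comparing with any `(A1 Y2)` of rank at most `rank L` and
letting `W2 → 1` shows that the second block of `L` solves the Golub–Hoffman–Stewart problem of
rank `rank L`.
-/

open Matrix Filter Topology

section Frobenius

variable {m n : Type*} [Fintype m] [Fintype n]

theorem frob_nonneg (M : Matrix m n ℝ) : 0 ≤ frob M := Real.sqrt_nonneg _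

@[simp]
theorem frob_zero : frob (0 : Matrix m n ℝ) = 0 := by simp [frob]

theorem frob_sq (M : Matrix m n ℝ) : frob M ^ 2 = ∑ i, ∑ j, M i j ^ 2 :=
  Real.sq_sqrt (by positivity)

theorem continuous_frob : Continuous (frob : Matrix m n ℝ → ℝ) := by
  unfold frob; fun_prop

theorem abs_apply_le_frob (M : Matrix m n ℝ) (i : m) (j : n) : |M i j| ≤ frob M :=
  Real.abs_le_sqrt <|
    (Finset.single_le_sum (fun j _ => sq_nonneg (M i j)) (Finset.mem_univ j)).trans <|
      Finset.single_le_sum (f := fun i => ∑ j, M i j ^ 2) (fun i _ => by positivity)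
        (Finset.mem_univ i)

theorem frob_le_sqrt_of_sq_apply_le {M : Matrix m n ℝ} {B : ℝ} (h : ∀ i j, M i j ^ 2 ≤ B) :
    frob M ≤ √(Fintype.card m * Fintype.card n * B) := by
  unfold frob
  gcongr
  calc ∑ i, ∑ j, M i j ^ 2 ≤ ∑ _i : m, ∑ _j : n, B :=
        Finset.sum_le_sum fun i _ => Finset.sum_le_sum fun j _ => h i j
    _ = _ := by simp [mul_assoc]

theorem frob_fromCols_le {n' : Type*} [Fintype n'] (M : Matrix m n ℝ) (N : Matrix m n' ℝ) :
    frob (fromCols M N) ≤ frob M + frob N := by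
  have h : frob (fromCols M N) ^ 2 = frob M ^ 2 + frob N ^ 2 := by
    simp only [frob_sq, Fintype.sum_sum_type, fromCols_apply_inl,
      fromCols_apply_inr, Finset.sum_add_distrib]
  nlinarith [frob_nonneg M, frob_nonneg N, frob_nonneg (fromCols M N)]

end Frobenius

theorem Matrix.eventually_rank_le_rank {𝕜 m n : Type*} [NontriviallyNormedField 𝕜]
    [CompleteSpace 𝕜] [Fintype m] [Fintype n] (L : Matrix m n 𝕜) :
    ∀ᶠ M in 𝓝 L, L.rank ≤ M.rank := by
  obtain ⟨κ, a, ha, hspan, hli⟩ := exists_linearIndependent' 𝕜 L.col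
  have : Finite κ := Finite.of_injective a ha
  have := Fintype.ofFinite κ
  have hcols : Continuous fun M : Matrix m n 𝕜 => M.col ∘ a :=
    continuous_pi fun k => continuous_pi fun i => continuous_apply_apply i (a k)
  filter_upwards [(hcols.tendsto L).eventually hli.eventually] with M hM
  calc L.rank = Fintype.card κ := by
        rw [rank_eq_finrank_span_cols, ← hspan, finrank_span_eq_card hli]
    _ = Module.finrank 𝕜 (Submodule.span 𝕜 (Set.range (M.col ∘ a))) :=
        (finrank_span_eq_card hM).symm
    _ ≤ M.rank := by
        rw [rank_eq_finrank_span_cols]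
        exact Submodule.finrank_mono (Submodule.span_mono (Set.range_comp_subset_range _ _))

theorem Matrix.continuous_toCols₁ {R m n₁ n₂ : Type*} [TopologicalSpace R] :
    Continuous (toCols₁ : Matrix m (n₁ ⊕ n₂) R → Matrix m n₁ R) :=
  continuous_pi fun i => continuous_pi fun j => continuous_apply_apply i (Sum.inl j)

theorem Matrix.continuous_toCols₂ {R m n₁ n₂ : Type*} [TopologicalSpace R] :
    Continuous (toCols₂ : Matrix m (n₁ ⊕ n₂) R → Matrix m n₂ R) :=
  continuous_pi fun i => continuous_pi fun j => continuous_apply_apply i (Sum.inr j)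

theorem tendsto_zero_of_abs_mul_le {ι : Type*} {l : Filter ι} {a w : ι → ℝ} {c : ℝ}
    (h : ∀ t, |a t * w t| ≤ c) (hw : Tendsto w l atTop) : Tendsto a l (𝓝 0) := by
  refine squeeze_zero_norm' ?_ ((tendsto_const_nhds (x := c)).div_atTop hw)
  filter_upwards [hw.eventually_gt_atTop 0] with t ht
  rw [Real.norm_eq_abs, le_div_iff₀ ht]
  simpa [abs_mul, abs_of_pos ht] using h t

section WeightedResidual

variable {ι m n : Type*} [Fintype m] [Fintype n] {l : Filter ι} {A : Matrix m n ℝ}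
  {X W : ι → Matrix m n ℝ}

theorem tendsto_of_frob_hadamard_sub_le {c : ℝ} (hX : ∀ t, frob ((A - X t) ⊙ W t) ≤ c)
    (hW : ∀ i j, Tendsto (fun t => W t i j) l atTop) : Tendsto X l (𝓝 A) := by
  refine tendsto_pi_nhds.2 fun i => tendsto_pi_nhds.2 fun j => ?_
  have hres : ∀ t, |(A i j - X t i j) * W t i j| ≤ c := fun t => by
    simpa using (abs_apply_le_frob _ i j).trans (hX t)
  simpa using (tendsto_const_nhds (x := A i j)).sub (tendsto_zero_of_abs_mul_le hres (hW i j))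

theorem exists_eventually_frob_le {c C : ℝ} (hc : 0 < c) (hX : ∀ t, frob ((A - X t) ⊙ W t) ≤ C)
    (hW : ∀ᶠ t in l, ∀ i j, c ≤ W t i j) : ∃ R, ∀ᶠ t in l, frob (X t) ≤ R := by
  refine ⟨√(Fintype.card m * Fintype.card n * (frob A + C / c) ^ 2), ?_⟩
  filter_upwards [hW] with t hWt
  refine frob_le_sqrt_of_sq_apply_le fun i j => sq_le_sq.2 ?_
  have hres : |A i j - X t i j| ≤ C / c := by
    rw [le_div_iff₀ hc]
    calc |A i j - X t i j| * c ≤ |A i j - X t i j| * |W t i j| :=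
          mul_le_mul_of_nonneg_left ((hWt i j).trans (le_abs_self _)) (abs_nonneg _)
      _ ≤ C := by simpa [abs_mul] using (abs_apply_le_frob _ i j).trans (hX t)
  calc |X t i j| ≤ |A i j| + |A i j - X t i j| := by
        linarith [abs_sub_abs_le_abs_sub (X t i j) (A i j), abs_sub_comm (X t i j) (A i j)]
    _ ≤ frob A + C / c := add_le_add (abs_apply_le_frob A i j) hres
    _ ≤ _ := le_abs_self _

theorem tendsto_frob_hadamard_sub {Z : Matrix m n ℝ} (hX : Tendsto X l (𝓝 Z))
    (hW : ∀ i j, Tendsto (fun t => W t i j) l (𝓝 1)) :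
    Tendsto (fun t => frob ((A - X t) ⊙ W t)) l (𝓝 (frob (A - Z))) := by
  refine (continuous_frob.tendsto _).comp <|
    tendsto_pi_nhds.2 fun i => tendsto_pi_nhds.2 fun j => ?_
  have hXij : Tendsto (fun t => X t i j) l (𝓝 (Z i j)) :=
    tendsto_pi_nhds.1 (tendsto_pi_nhds.1 hX i) j
  simpa using (tendsto_const_nhds.sub hXij).mul (hW i j)

end WeightedResidual

section Objective

variable {m n₁ n₂ : Type*} [Fintype m] [Fintype n₁] [Fintype n₂] {τ : ℝ}
  {A₁ W₁ X₁ : Matrix m n₁ ℝ} {A₂ W₂ X₂ Y₂ : Matrix m n₂ ℝ}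

noncomputable def weightedRankObjective (τ : ℝ) (A₁ : Matrix m n₁ ℝ) (A₂ : Matrix m n₂ ℝ)
    (W₁ : Matrix m n₁ ℝ) (W₂ : Matrix m n₂ ℝ) (X₁ : Matrix m n₁ ℝ) (X₂ : Matrix m n₂ ℝ) : ℝ :=
  frob ((A₁ - X₁) ⊙ W₁) ^ 2 + frob ((A₂ - X₂) ⊙ W₂) ^ 2 + τ * (fromCols X₁ X₂).rank

theorem frob_hadamard_sub_le_of_objective_le (hτ : 0 ≤ τ)
    (hX : weightedRankObjective τ A₁ A₂ W₁ W₂ X₁ X₂ ≤ weightedRankObjective τ A₁ A₂ W₁ W₂ A₁ A₂) :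
    frob ((A₁ - X₁) ⊙ W₁) ≤ √(τ * (fromCols A₁ A₂).rank) ∧
      frob ((A₂ - X₂) ⊙ W₂) ≤ √(τ * (fromCols A₁ A₂).rank) := by
  simp only [weightedRankObjective, sub_self, zero_hadamard, frob_zero] at hX
  have hrank : 0 ≤ τ * (fromCols X₁ X₂).rank := by positivity
  constructor <;> refine (le_abs_self _).trans (Real.abs_le_sqrt ?_) <;>
    nlinarith [sq_nonneg (frob ((A₁ - X₁) ⊙ W₁)), sq_nonneg (frob ((A₂ - X₂) ⊙ W₂))]

theorem frob_hadamard_sub_le_of_rank_le (hτ : 0 ≤ τ)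
    (hX : weightedRankObjective τ A₁ A₂ W₁ W₂ X₁ X₂ ≤ weightedRankObjective τ A₁ A₂ W₁ W₂ A₁ Y₂)
    (hrank : (fromCols A₁ Y₂).rank ≤ (fromCols X₁ X₂).rank) :
    frob ((A₂ - X₂) ⊙ W₂) ≤ frob ((A₂ - Y₂) ⊙ W₂) := by
  simp only [weightedRankObjective, sub_self, zero_hadamard, frob_zero] at hX
  have hτrank : τ * (fromCols A₁ Y₂).rank ≤ τ * (fromCols X₁ X₂).rank := by gcongr
  rw [← pow_le_pow_iff_left₀ (frob_nonneg _) (frob_nonneg _) two_ne_zero]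
  nlinarith [sq_nonneg (frob ((A₁ - X₁) ⊙ W₁))]

end Objective

theorem stmt_2_general {m k l : ℕ}
    (A1 : Matrix (Fin m) (Fin k) ℝ) (A2 : Matrix (Fin m) (Fin l) ℝ)
    (τ : ℝ) (hτ : 0 < τ)
    (W1 : ℕ → Matrix (Fin m) (Fin k) ℝ) (W2 : ℕ → Matrix (Fin m) (Fin l) ℝ)
    (hW1 : ∀ i j, Tendsto (fun t => W1 t i j) atTop atTop)
    (hW2 : ∀ i j, Tendsto (fun t => W2 t i j) atTop (nhds 1))
    (X1 : ℕ → Matrix (Fin m) (Fin k) ℝ) (X2 : ℕ → Matrix (Fin m) (Fin l) ℝ)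
    (hmin : ∀ t, ∀ (Y1 : Matrix (Fin m) (Fin k) ℝ) (Y2 : Matrix (Fin m) (Fin l) ℝ),
      frob (Matrix.hadamard (A1 - X1 t) (W1 t)) ^ 2 +
          frob (Matrix.hadamard (A2 - X2 t) (W2 t)) ^ 2 +
          τ * ((Matrix.fromCols (X1 t) (X2 t)).rank : ℝ) ≤
        frob (Matrix.hadamard (A1 - Y1) (W1 t)) ^ 2 +
          frob (Matrix.hadamard (A2 - Y2) (W2 t)) ^ 2 +
          τ * ((Matrix.fromCols Y1 Y2).rank : ℝ)) :
    (∃ R : ℝ, ∀ᶠ t in atTop, frob (Matrix.fromCols (X1 t) (X2 t)) ≤ R) ∧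
    ∀ L : Matrix (Fin m) (Fin k ⊕ Fin l) ℝ,
      (∃ φ : ℕ → ℕ, StrictMono φ ∧
        Tendsto (fun t => Matrix.fromCols (X1 (φ t)) (X2 (φ t))) atTop (nhds L)) →
      ∃ r ≤ min m (k + l), ∃ Z2 : Matrix (Fin m) (Fin l) ℝ,
        L = Matrix.fromCols A1 Z2 ∧
        (Matrix.fromCols A1 Z2).rank ≤ r ∧
        ∀ Y2 : Matrix (Fin m) (Fin l) ℝ, (Matrix.fromCols A1 Y2).rank ≤ r →
          frob (A2 - Z2) ≤ frob (A2 - Y2) := by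
  have hres t := frob_hadamard_sub_le_of_objective_le hτ.le (hmin t A1 A2)
  refine ⟨?_, ?_⟩
  · obtain ⟨R1, hR1⟩ := exists_eventually_frob_le one_pos (fun t => (hres t).1) <|
      eventually_all.2 fun i => eventually_all.2 fun j => (hW1 i j).eventually_ge_atTop 1
    obtain ⟨R2, hR2⟩ := exists_eventually_frob_le one_half_pos (fun t => (hres t).2) <|
      eventually_all.2 fun i => eventually_all.2 fun j =>
        (hW2 i j).eventually (eventually_ge_nhds one_half_lt_one)
    exact ⟨R1 + R2, by filter_upwards [hR1, hR2] with t h1 h2 using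
      (frob_fromCols_le _ _).trans (add_le_add h1 h2)⟩
  · rintro L ⟨φ, hφ, hL⟩
    have hW2φ i j := (hW2 i j).comp hφ.tendsto_atTop
    have hX1 : Tendsto (fun t => X1 (φ t)) atTop (𝓝 A1) :=
      tendsto_of_frob_hadamard_sub_le (fun t => (hres (φ t)).1)
        fun i j => (hW1 i j).comp hφ.tendsto_atTop
    have hL1 : L.toCols₁ = A1 :=
      tendsto_nhds_unique ((continuous_toCols₁.tendsto L).comp hL) hX1
    have hX2 : Tendsto (fun t => X2 (φ t)) atTop (𝓝 L.toCols₂) :=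
      (continuous_toCols₂.tendsto L).comp hL
    have hL_eq : L = fromCols A1 L.toCols₂ := by rw [← hL1, fromCols_toCols]
    refine ⟨L.rank, le_min (by simpa using L.rank_le_card_height)
      (by simpa using L.rank_le_card_width), L.toCols₂, hL_eq, hL_eq ▸ le_rfl, fun Y2 hY2 => ?_⟩
    refine le_of_tendsto_of_tendsto (tendsto_frob_hadamard_sub hX2 hW2φ)
      (tendsto_frob_hadamard_sub tendsto_const_nhds hW2φ) ?_
    filter_upwards [hL.eventually L.eventually_rank_le_rank] with t ht
    exact frob_hadamard_sub_le_of_rank_le hτ.le (hmin (φ t) A1 Y2) (hY2.trans ht)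

/-- **Theorem 2.2.** For weights `(W1 W2)` with `(W1)_{ij} → ∞` and `(W2)_{ij} → 1`, the
minimizers `(X̂1(W) X̂2(W))` of `‖((A1 A2) − (X1 X2)) ⊙ (W1 W2)‖_F² + τ·rank (X1 X2)` stay
bounded, and every accumulation point belongs to the union over `0 ≤ r ≤ min {m, n}` of the
solution sets of the Golub–Hoffman–Stewart problems. -/
theorem stmt_2 {m k l : ℕ}
    (A1 : Matrix (Fin m) (Fin k) ℝ) (A2 : Matrix (Fin m) (Fin l) ℝ)
    (τ : ℝ) (hτ : 0 < τ) (hrank : A1.rank = k)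
    (W1 : ℕ → Matrix (Fin m) (Fin k) ℝ) (W2 : ℕ → Matrix (Fin m) (Fin l) ℝ)
    (hW1pos : ∀ t i j, 0 < W1 t i j)
    (hW1 : ∀ i j, Tendsto (fun t => W1 t i j) atTop atTop)
    (hW2 : ∀ i j, Tendsto (fun t => W2 t i j) atTop (nhds 1))
    (X1 : ℕ → Matrix (Fin m) (Fin k) ℝ) (X2 : ℕ → Matrix (Fin m) (Fin l) ℝ)
    (hmin : ∀ t, ∀ (Y1 : Matrix (Fin m) (Fin k) ℝ) (Y2 : Matrix (Fin m) (Fin l) ℝ),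
      frob (Matrix.hadamard (A1 - X1 t) (W1 t)) ^ 2 +
          frob (Matrix.hadamard (A2 - X2 t) (W2 t)) ^ 2 +
          τ * ((Matrix.fromCols (X1 t) (X2 t)).rank : ℝ) ≤
        frob (Matrix.hadamard (A1 - Y1) (W1 t)) ^ 2 +
          frob (Matrix.hadamard (A2 - Y2) (W2 t)) ^ 2 +
          τ * ((Matrix.fromCols Y1 Y2).rank : ℝ)) :
    (∃ R : ℝ, ∀ᶠ t in atTop, frob (Matrix.fromCols (X1 t) (X2 t)) ≤ R) ∧
    ∀ L : Matrix (Fin m) (Fin k ⊕ Fin l) ℝ,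
      (∃ φ : ℕ → ℕ, StrictMono φ ∧
        Tendsto (fun t => Matrix.fromCols (X1 (φ t)) (X2 (φ t))) atTop (nhds L)) →
      ∃ r ≤ min m (k + l), ∃ Z2 : Matrix (Fin m) (Fin l) ℝ,
        L = Matrix.fromCols A1 Z2 ∧
        (Matrix.fromCols A1 Z2).rank ≤ r ∧
        ∀ Y2 : Matrix (Fin m) (Fin l) ℝ, (Matrix.fromCols A1 Y2).rank ≤ r →
          frob (A2 - Z2) ≤ frob (A2 - Y2) :=
  stmt_2_general A1 A2 τ hτ W1 W2 hW1 hW2 X1 X2 hmin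
end

section
/- Let B, B̃ ∈ ℝ^{m×k} be matrices of full rank k, and let η > 0 denote the smallest singular value of B̃. Let P_B and P_{B̃} denote the orthogonal projections onto the column spaces of B and B̃, respectively. Then ‖P_B − P_{B̃}‖_F ≤ 2‖B − B̃‖_F / η. -/
open Matrix Filter Topology

/-! ### Auxiliary lemmas -/

noncomputable def fsq {α β : Type*} [Fintype α] [Fintype β] (M : Matrix α β ℝ) : ℝ :=
  ∑ i, ∑ j, (M i j) ^ 2

lemma frob_eq_sqrt_fsq {α β : Type*} [Fintype α] [Fintype β] (M : Matrix α β ℝ) :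
    frob M = Real.sqrt (fsq M) := rfl

lemma fsq_nonneg {α β : Type*} [Fintype α] [Fintype β] (M : Matrix α β ℝ) : 0 ≤ fsq M := by
  unfold fsq; positivity

lemma fsq_eq_trace {α β : Type*} [Fintype α] [Fintype β] (M : Matrix α β ℝ) :
    fsq M = Matrix.trace (M * Mᵀ) := by
  simp [fsq, Matrix.trace, Matrix.mul_apply, Matrix.diag, pow_two]

lemma fsq_mul_orth {α β γ : Type*} [Fintype α] [Fintype β] [Fintype γ] [DecidableEq β]
    (X : Matrix α β ℝ) (W : Matrix β γ ℝ) (hW : W * Wᵀ = 1) : fsq (X * W) = fsq X := by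
  rw [fsq_eq_trace, fsq_eq_trace, Matrix.transpose_mul, Matrix.mul_assoc,
    ← Matrix.mul_assoc W, hW, Matrix.one_mul]

lemma fsq_mul_diagonal {α β : Type*} [Fintype α] [Fintype β] [DecidableEq β]
    (X : Matrix α β ℝ) (d : β → ℝ) (c : ℝ) (hd : ∀ j, |d j| ≤ c) :
    fsq (X * Matrix.diagonal d) ≤ c ^ 2 * fsq X := by
  unfold fsq
  rw [Finset.mul_sum]
  refine Finset.sum_le_sum fun i _ => ?_
  rw [Finset.mul_sum]
  refine Finset.sum_le_sum fun j _ => ?_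
  rw [Matrix.mul_diagonal]
  obtain ⟨h1, h2⟩ := abs_le.mp (hd j)
  have h3 : (d j) ^ 2 ≤ c ^ 2 := sq_le_sq' h1 h2
  nlinarith [sq_nonneg (X i j)]

lemma fsq_sub_proj {α : Type*} [Fintype α] [DecidableEq α]
    (P Q : Matrix α α ℝ) (hPt : Pᵀ = P) (hPP : P * P = P)
    (hQt : Qᵀ = Q) (hQQ : Q * Q = Q) :
    fsq (P - Q) = Matrix.trace P + Matrix.trace Q - 2 * Matrix.trace (P * Q) := by
  rw [fsq_eq_trace, Matrix.transpose_sub, hPt, hQt]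
  have h : (P - Q) * (P - Q) = P * P - P * Q - Q * P + Q * Q := by noncomm_ring
  rw [h, hPP, hQQ, Matrix.trace_add, Matrix.trace_sub, Matrix.trace_sub,
    Matrix.trace_mul_comm Q P]
  ring

lemma fsq_comp_proj {α : Type*} [Fintype α] [DecidableEq α]
    (P Q : Matrix α α ℝ) (hPt : Pᵀ = P) (hPP : P * P = P)
    (hQt : Qᵀ = Q) (hQQ : Q * Q = Q) :
    fsq ((1 - P) * Q) = Matrix.trace Q - Matrix.trace (P * Q) := by
  rw [fsq_eq_trace]
  have h : (1 - P) * Q * ((1 - P) * Q)ᵀ = (1 - P) * Q * (1 - P) := by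
    rw [Matrix.transpose_mul, Matrix.transpose_sub, Matrix.transpose_one, hPt, hQt,
      Matrix.mul_assoc, Matrix.mul_assoc, ← Matrix.mul_assoc Q Q, hQQ]
  rw [h]
  have h2 : (1 - P) * Q * (1 - P) = Q - P * Q - Q * P + P * Q * P := by noncomm_ring
  have h3 : Matrix.trace (P * Q * P) = Matrix.trace (P * Q) := by
    rw [Matrix.trace_mul_comm (P * Q) P, ← Matrix.mul_assoc, hPP]
  rw [h2, Matrix.trace_add, Matrix.trace_sub, Matrix.trace_sub, h3,
    Matrix.trace_mul_comm Q P]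
  ring

lemma fsq_one_sub_proj_mul_le {α β : Type*} [Fintype α] [Fintype β] [DecidableEq α]
    (P : Matrix α α ℝ) (hPt : Pᵀ = P) (hPP : P * P = P)
    (X : Matrix α β ℝ) : fsq ((1 - P) * X) ≤ fsq X := by
  have e1 : fsq (P * X) = Matrix.trace (X * Xᵀ * P) := by
    rw [fsq_eq_trace, Matrix.transpose_mul, hPt]
    have h : P * X * (Xᵀ * P) = P * (X * Xᵀ) * P := by simp only [Matrix.mul_assoc]
    rw [h, Matrix.trace_mul_comm (P * (X * Xᵀ)) P, ← Matrix.mul_assoc, hPP,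
      Matrix.trace_mul_comm P (X * Xᵀ)]
  have h2 : (1 - P) * (1 - P) = 1 - P := by
    rw [show (1 - P) * (1 - P) = 1 - P - P + P * P from by noncomm_ring, hPP]; abel
  have e2 : fsq ((1 - P) * X) = Matrix.trace (X * Xᵀ) - Matrix.trace (X * Xᵀ * P) := by
    rw [fsq_eq_trace, Matrix.transpose_mul, Matrix.transpose_sub, Matrix.transpose_one, hPt]
    have h : (1 - P) * X * (Xᵀ * (1 - P)) = (1 - P) * (X * Xᵀ) * (1 - P) := by
      simp only [Matrix.mul_assoc]
    rw [h, Matrix.trace_mul_comm ((1 - P) * (X * Xᵀ)) (1 - P), ← Matrix.mul_assoc, h2,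
      sub_mul, one_mul, Matrix.trace_sub, Matrix.trace_mul_comm P (X * Xᵀ)]
  have h4 := fsq_nonneg (P * X)
  have h5 := fsq_eq_trace X
  linarith

lemma gram_isUnit {m k : ℕ} (B : Matrix (Fin m) (Fin k) ℝ) (hB : B.rank = k) :
    IsUnit (Bᵀ * B) := by
  have h1 : (Bᵀ * B).rank = k := by rw [Matrix.rank_transpose_mul_self, hB]
  rw [← Matrix.mulVec_surjective_iff_isUnit]
  have htop : LinearMap.range (Bᵀ * B).mulVecLin = ⊤ := by
    apply Submodule.eq_top_of_finrank_eq
    rw [show Module.finrank ℝ (Fin k → ℝ) = k from by simp]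
    exact h1
  intro y
  obtain ⟨x, hx⟩ := LinearMap.range_eq_top.mp htop y
  exact ⟨x, by simpa only [Matrix.mulVecLin_apply] using hx⟩

lemma projCol_transpose {m k : ℕ} (B : Matrix (Fin m) (Fin k) ℝ) :
    (projCol B)ᵀ = projCol B := by
  unfold projCol
  rw [Matrix.transpose_mul, Matrix.transpose_mul, Matrix.transpose_transpose,
    Matrix.transpose_nonsing_inv, Matrix.transpose_mul, Matrix.transpose_transpose,
    Matrix.mul_assoc]

lemma projCol_mul_self_base {m k : ℕ} (B : Matrix (Fin m) (Fin k) ℝ) (hB : B.rank = k) :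
    projCol B * B = B := by
  unfold projCol
  rw [Matrix.mul_assoc (B * (Bᵀ * B)⁻¹) Bᵀ B,
    Matrix.nonsing_inv_mul_cancel_right _ _ ((Matrix.isUnit_iff_isUnit_det _).mp
      (gram_isUnit B hB))]

lemma projCol_idem {m k : ℕ} (B : Matrix (Fin m) (Fin k) ℝ) (hB : B.rank = k) :
    projCol B * projCol B = projCol B := by
  have e : B * ((Bᵀ * B)⁻¹ * Bᵀ) = projCol B := (Matrix.mul_assoc B (Bᵀ * B)⁻¹ Bᵀ).symm
  have h : projCol B * projCol B = projCol B * (B * ((Bᵀ * B)⁻¹ * Bᵀ)) := by rw [e]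
  rw [h, ← Matrix.mul_assoc, ← Matrix.mul_assoc, projCol_mul_self_base B hB]
  rfl

lemma projCol_trace {m k : ℕ} (B : Matrix (Fin m) (Fin k) ℝ) (hB : B.rank = k) :
    Matrix.trace (projCol B) = k := by
  have hdet := (Matrix.isUnit_iff_isUnit_det _).mp (gram_isUnit B hB)
  have h1 : (Bᵀ * B)⁻¹ * (Bᵀ * B) = 1 := Matrix.nonsing_inv_mul _ hdet
  unfold projCol
  rw [Matrix.mul_assoc, Matrix.trace_mul_comm B ((Bᵀ * B)⁻¹ * Bᵀ), Matrix.mul_assoc]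
  calc Matrix.trace ((Bᵀ * B)⁻¹ * (Bᵀ * B)) = Matrix.trace (1 : Matrix (Fin k) (Fin k) ℝ) :=
        congrArg _ h1
    _ = k := by simp

def inclJ (k m : ℕ) : Matrix (Fin k) (Fin m) ℝ :=
  Matrix.of fun i j => if (i : ℕ) = (j : ℕ) then 1 else 0

lemma inclJ_mul_transpose {k m : ℕ} (km : k ≤ m) : inclJ k m * (inclJ k m)ᵀ = 1 := by
  ext i j
  rw [Matrix.mul_apply, Matrix.one_apply]
  rw [Finset.sum_eq_single (Fin.castLE km i)]
  · simp only [inclJ, Matrix.transpose_apply, Matrix.of_apply, Fin.coe_castLE]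
    split_ifs with h1 h2 h3 h4 <;> simp_all [Fin.ext_iff]
  · intro b _ hb
    simp only [inclJ, Matrix.transpose_apply, Matrix.of_apply]
    have : (i : ℕ) ≠ (b : ℕ) := by
      intro h; exact hb (by simp [Fin.ext_iff, ← h])
    simp [this]
  · intro h; exact absurd (Finset.mem_univ _) h

lemma svdDiag_decomp {m k : ℕ} (σ : ℕ → ℝ) (km : k ≤ m) :
    svdDiag m k σ = (inclJ k m)ᵀ * Matrix.diagonal (fun i : Fin k => σ ((i : ℕ) + 1)) := by
  ext i j
  rw [Matrix.mul_apply]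
  rw [Finset.sum_eq_single j]
  · simp only [inclJ, svdDiag, Matrix.transpose_apply, Matrix.of_apply,
      Matrix.diagonal_apply_eq]
    split_ifs with h1 h2 h3 <;> simp_all
  · intro b _ hb
    rw [Matrix.diagonal_apply_ne _ hb, mul_zero]
  · intro h; exact absurd (Finset.mem_univ _) h

/-- **Lemma 3.4 (projection perturbation).** If `B, B̃ ∈ ℝ^{m×k}` are full rank and `η > 0`
is the smallest singular value of `B̃`, then `‖P_B − P_{B̃}‖_F ≤ 2‖B − B̃‖_F / η`. -/
theorem stmt_4 {m k : ℕ}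
    (B Bt : Matrix (Fin m) (Fin k) ℝ)
    (hB : B.rank = k) (hBt : Bt.rank = k)
    (U : Matrix (Fin m) (Fin m) ℝ) (σ : ℕ → ℝ) (V : Matrix (Fin k) (Fin k) ℝ)
    (hsvd : IsSVD Bt U σ V)
    (η : ℝ) (hη : η = σ k) (hηpos : 0 < η) :
    frob (projCol B - projCol Bt) ≤ 2 * frob (B - Bt) / η := by
  have km : k ≤ m := by
    have h := B.rank_le_card_height
    rw [hB] at h
    simpa using h
  set P := projCol B with hPdef
  set Q := projCol Bt with hQdef
  set J := inclJ k m with hJdef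
  set D := Matrix.diagonal (fun i : Fin k => σ ((i : ℕ) + 1)) with hDdef
  set Dinv := Matrix.diagonal (fun i : Fin k => (σ ((i : ℕ) + 1))⁻¹) with hDinvdef
  -- singular values are bounded below by η
  have hσge : ∀ i : Fin k, η ≤ σ ((i : ℕ) + 1) := by
    intro i
    rw [hη]
    exact hsvd.anti ((i : ℕ) + 1) k (Nat.le_add_left 1 i) i.2
  have hσpos : ∀ i : Fin k, 0 < σ ((i : ℕ) + 1) := fun i => lt_of_lt_of_le hηpos (hσge i)
  have hσne : ∀ i : Fin k, σ ((i : ℕ) + 1) ≠ 0 := fun i => ne_of_gt (hσpos i)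
  have hDD : D * Dinv = 1 := by
    rw [hDdef, hDinvdef, Matrix.diagonal_mul_diagonal]
    rw [show (fun i : Fin k => σ ((i : ℕ) + 1) * (σ ((i : ℕ) + 1))⁻¹) = fun _ => (1:ℝ) from
      funext fun i => mul_inv_cancel₀ (hσne i)]
    exact Matrix.diagonal_one
  have hDinvD : Dinv * D = 1 := by
    rw [hDdef, hDinvdef, Matrix.diagonal_mul_diagonal]
    rw [show (fun i : Fin k => (σ ((i : ℕ) + 1))⁻¹ * σ ((i : ℕ) + 1)) = fun _ => (1:ℝ) from
      funext fun i => inv_mul_cancel₀ (hσne i)]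
    exact Matrix.diagonal_one
  -- decomposition of the Gram matrix
  have hBtB : Btᵀ * Bt = V * (D * (D * Vᵀ)) := by
    rw [hsvd.hM, svdDiag_decomp σ km]
    simp only [Matrix.transpose_mul, Matrix.transpose_transpose, Matrix.diagonal_transpose]
    simp only [Matrix.mul_assoc, ← hJdef, ← hDdef]
    rw [← Matrix.mul_assoc Uᵀ U, hsvd.hUl, Matrix.one_mul,
      ← Matrix.mul_assoc J Jᵀ, inclJ_mul_transpose km, Matrix.one_mul]
  have hinv : (Btᵀ * Bt)⁻¹ = V * (Dinv * (Dinv * Vᵀ)) := by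
    apply Matrix.inv_eq_right_inv
    rw [hBtB]
    simp only [Matrix.mul_assoc]
    rw [← Matrix.mul_assoc Vᵀ V, hsvd.hVl, Matrix.one_mul,
      ← Matrix.mul_assoc D Dinv (Dinv * Vᵀ), hDD, Matrix.one_mul,
      ← Matrix.mul_assoc D Dinv Vᵀ, hDD, Matrix.one_mul, hsvd.hVr]
  -- decomposition of the pseudoinverse
  have hM2 : (Btᵀ * Bt)⁻¹ * Btᵀ = V * (Dinv * (J * Uᵀ)) := by
    rw [hinv, hsvd.hM, svdDiag_decomp σ km]
    simp only [Matrix.transpose_mul, Matrix.transpose_transpose, Matrix.diagonal_transpose]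
    simp only [Matrix.mul_assoc, ← hJdef, ← hDdef]
    rw [← Matrix.mul_assoc Vᵀ V, hsvd.hVl, Matrix.one_mul,
      ← Matrix.mul_assoc Dinv D (J * Uᵀ), hDinvD, Matrix.one_mul]
  -- the matrix J * Uᵀ has orthonormal rows
  have hW : (J * Uᵀ) * (J * Uᵀ)ᵀ = 1 := by
    simp only [Matrix.transpose_mul, Matrix.transpose_transpose, Matrix.mul_assoc]
    rw [← Matrix.mul_assoc Uᵀ U Jᵀ, hsvd.hUl, Matrix.one_mul]
    exact inclJ_mul_transpose km
  -- projection properties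
  have hPt : Pᵀ = P := projCol_transpose B
  have hPP : P * P = P := projCol_idem B hB
  have hQt : Qᵀ = Q := projCol_transpose Bt
  have hQQ : Q * Q = Q := projCol_idem Bt hBt
  have hPtr : Matrix.trace P = k := projCol_trace B hB
  have hQtr : Matrix.trace Q = k := projCol_trace Bt hBt
  -- the key trace identity : fsq (P - Q) = 2 * fsq ((1 - P) * Q)
  have hkey : fsq (P - Q) = 2 * fsq ((1 - P) * Q) := by
    rw [fsq_sub_proj P Q hPt hPP hQt hQQ, fsq_comp_proj P Q hPt hPP hQt hQQ, hPtr, hQtr]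
    ring
  -- (1 - P) * Q = ((1 - P) * (Bt - B)) * ((Btᵀ * Bt)⁻¹ * Btᵀ)
  set X := (1 - P) * (Bt - B) with hXdef
  have hPB : (1 - P) * B = 0 := by
    rw [Matrix.sub_mul, Matrix.one_mul, projCol_mul_self_base B hB, sub_self]
  have hXBt : (1 - P) * Bt = X := by
    rw [hXdef, Matrix.mul_sub, hPB, sub_zero]
  have hfact : (1 - P) * Q = X * ((Btᵀ * Bt)⁻¹ * Btᵀ) := by
    rw [hQdef, show projCol Bt = Bt * ((Btᵀ * Bt)⁻¹ * Btᵀ) from Matrix.mul_assoc _ _ _,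
      ← Matrix.mul_assoc (1 - P) Bt _, hXBt]
  -- bound fsq ((1 - P) * Q)
  have habs : ∀ i : Fin k, |(σ ((i : ℕ) + 1))⁻¹| ≤ η⁻¹ := by
    intro i
    rw [abs_of_pos (inv_pos.mpr (hσpos i))]
    exact inv_anti₀ hηpos (hσge i)
  have hbound : fsq ((1 - P) * Q) ≤ η⁻¹ ^ 2 * fsq (Bt - B) := by
    rw [hfact, hM2]
    have e1 : X * (V * (Dinv * (J * Uᵀ))) = ((X * V) * Dinv) * (J * Uᵀ) := by
      simp only [Matrix.mul_assoc]
    rw [e1, fsq_mul_orth _ _ hW]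
    calc fsq ((X * V) * Dinv) ≤ η⁻¹ ^ 2 * fsq (X * V) := by
          rw [hDinvdef]; exact fsq_mul_diagonal (X * V) _ _ habs
      _ = η⁻¹ ^ 2 * fsq X := by rw [fsq_mul_orth _ _ hsvd.hVr]
      _ ≤ η⁻¹ ^ 2 * fsq (Bt - B) := by
          have := fsq_one_sub_proj_mul_le P hPt hPP (Bt - B)
          have h2 : (0:ℝ) ≤ η⁻¹ ^ 2 := by positivity
          rw [hXdef]
          nlinarith [this]
  have hsym : fsq (Bt - B) = fsq (B - Bt) := by
    unfold fsq
    congr 1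
    funext i
    congr 1
    funext j
    simp only [Matrix.sub_apply]
    ring
  -- final numeric computation
  have hfsqB : frob (B - Bt) ^ 2 = fsq (B - Bt) := by
    rw [frob_eq_sqrt_fsq, Real.sq_sqrt (fsq_nonneg _)]
  have hfrobnn : 0 ≤ frob (B - Bt) := Real.sqrt_nonneg _
  have hkey2 : fsq (P - Q) ≤ (2 * frob (B - Bt) / η) ^ 2 := by
    have h1 : (2 * frob (B - Bt) / η) ^ 2 = 4 * fsq (B - Bt) * (η⁻¹ ^ 2) := by
      rw [← hfsqB]; field_simp; ring
    have h2 : (0:ℝ) ≤ η⁻¹ ^ 2 := by positivity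
    have h3 : (0:ℝ) ≤ fsq (B - Bt) := fsq_nonneg _
    rw [h1, hkey]
    nlinarith [hbound, hsym]
  calc frob (P - Q) = Real.sqrt (fsq (P - Q)) := frob_eq_sqrt_fsq _
    _ ≤ Real.sqrt ((2 * frob (B - Bt) / η) ^ 2) := Real.sqrt_le_sqrt hkey2
    _ = 2 * frob (B - Bt) / η := Real.sqrt_sq (by positivity)
end

section
/- Let A = (A1 A2) ∈ ℝ^{m×n} with A1 ∈ ℝ^{m×k} of full rank k, and set 𝒜 = P⊥_{A1}(A2) with singular values σ1 ≥ σ2 ≥ …; assume σ_{r−k} > σ_{r−k+1}. For weight matrices W = (W1 W2), with W1 having positive entries and W2 bounded, let (X̃1(W) X̃2(W)) minimize ‖((A1 A2) − (X1 X2)) ⊙ (W1 W2)‖_F² over rank(X1 X2) ≤ r, set 𝒜̃ = P⊥_{X̃1(W)}(A2) and λ = min_{i,j}(W1)_{ij}. Then ‖H_{r−k}(𝒜̃) − H_{r−k}(𝒜)‖ = O(1/λ) as λ → ∞. -/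
/-!
Comparing the minimiser with the feasible point `(A1, 0)` gives `λ ‖X̃1 - A1‖ ≤ ρ ‖A2‖`, so
`X̃1 = A1 + O(1/λ)`. Since `A1` has full column rank, its Gram matrix stays invertible nearby and
`B ↦ P_B` is locally Lipschitz at `A1`; hence `𝒜̃ = 𝒜 + O(1/λ)`. Finally `H_s` (with `s = r - k`)
is locally Lipschitz at a matrix with a gap `σ_s > σ_{s+1}`: write `H_s(M) = P_s M`, where `P_s`
projects onto the leading `s` left singular vectors. Weyl's inequality for the eigenvalues of
`M Mᵀ` keeps the perturbed spectrum split at `s`, and the Davis–Kahan argument then bounds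
`‖P̃_s - P_s‖` by `2 ‖M̃ M̃ᵀ - M Mᵀ‖ / (σ_s² - σ_{s+1}²)`.
-/

open Matrix Filter Topology

open scoped Matrix.Norms.Frobenius

theorem frob_eq_norm {α β : Type*} [Fintype α] [Fintype β] (M : Matrix α β ℝ) :
    frob M = ‖M‖ := by
  rw [frobenius_norm_def, frob, Real.sqrt_eq_rpow]
  simp_rw [Real.norm_eq_abs, Real.rpow_two, sq_abs]

namespace Matrix

section Frobenius

variable {α β γ δ : Type*} [Fintype α] [Fintype β] [Fintype γ] [Fintype δ]

theorem frobenius_norm_sq_eq_sum (M : Matrix α β ℝ) : ‖M‖ ^ 2 = ∑ i, ∑ j, M i j ^ 2 := by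
  rw [← frob_eq_norm, frob, Real.sq_sqrt (by positivity)]

theorem frobenius_norm_sq_eq_trace (M : Matrix α β ℝ) : ‖M‖ ^ 2 = trace (Mᵀ * M) := by
  rw [frobenius_norm_sq_eq_sum, Finset.sum_comm]
  simp [trace, mul_apply, sq]

theorem frobenius_norm_orthogonal_mul [DecidableEq α] {Q : Matrix α α ℝ} (hQ : Qᵀ * Q = 1)
    (M : Matrix α β ℝ) : ‖Q * M‖ = ‖M‖ := by
  rw [← sq_eq_sq₀ (norm_nonneg _) (norm_nonneg _), frobenius_norm_sq_eq_trace,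
    frobenius_norm_sq_eq_trace, transpose_mul, Matrix.mul_assoc, ← Matrix.mul_assoc Qᵀ, hQ,
    Matrix.one_mul]

theorem frobenius_norm_mul_orthogonal [DecidableEq β] {Q : Matrix β β ℝ} (hQ : Q * Qᵀ = 1)
    (M : Matrix α β ℝ) : ‖M * Q‖ = ‖M‖ := by
  rw [← frobenius_norm_transpose, transpose_mul,
    frobenius_norm_orthogonal_mul (by simpa using hQ), frobenius_norm_transpose]

theorem frobenius_norm_conj_sub_conj [DecidableEq α] {U U' : Matrix α α ℝ} (hUl : Uᵀ * U = 1)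
    (hUr : U * Uᵀ = 1) (hU'l : U'ᵀ * U' = 1) (hU'r : U' * U'ᵀ = 1) (A B : Matrix α α ℝ) :
    ‖U' * A * U'ᵀ - U * B * Uᵀ‖ = ‖A * (U'ᵀ * U) - (U'ᵀ * U) * B‖ := by
  have hconj : U'ᵀ * (U' * A * U'ᵀ - U * B * Uᵀ) * U = A * (U'ᵀ * U) - (U'ᵀ * U) * B := by
    simp only [Matrix.mul_sub, Matrix.sub_mul, ← Matrix.mul_assoc, hU'l, Matrix.one_mul]
    simp only [Matrix.mul_assoc, hUl, Matrix.mul_one]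
  rw [← hconj, frobenius_norm_mul_orthogonal hUr,
    frobenius_norm_orthogonal_mul (by rwa [transpose_transpose])]

theorem frobenius_norm_mul_mul_le (X : Matrix α β ℝ) (Y : Matrix β γ ℝ) (Z : Matrix γ δ ℝ) :
    ‖X * Y * Z‖ ≤ ‖X‖ * ‖Y‖ * ‖Z‖ :=
  (frobenius_norm_mul _ _).trans
    (mul_le_mul_of_nonneg_right (frobenius_norm_mul _ _) (norm_nonneg _))

theorem frobenius_norm_le_mul_of_abs_le {X Y : Matrix α β ℝ} {c : ℝ} (hc : 0 ≤ c)
    (h : ∀ i j, |X i j| ≤ c * |Y i j|) : ‖X‖ ≤ c * ‖Y‖ := by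
  rw [← pow_le_pow_iff_left₀ (norm_nonneg _) (by positivity) two_ne_zero, mul_pow,
    frobenius_norm_sq_eq_sum, frobenius_norm_sq_eq_sum, Finset.mul_sum]
  gcongr with i _
  rw [Finset.mul_sum]
  gcongr with j _
  rw [← sq_abs, ← sq_abs (Y i j), ← mul_pow]
  exact pow_le_pow_left₀ (abs_nonneg _) (h i j) 2

theorem dotProduct_mulVec_le_frobenius_norm_mul (E : Matrix α α ℝ) (x : α → ℝ) :
    x ⬝ᵥ (E *ᵥ x) ≤ ‖E‖ * (x ⬝ᵥ x) := by
  have hq : ‖replicateRow Unit x * (E * replicateCol Unit x)‖ = |x ⬝ᵥ (E *ᵥ x)| := by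
    rw [← replicateCol_mulVec, replicateRow_mul_replicateCol, ← Real.sqrt_sq (norm_nonneg _),
      frobenius_norm_sq_eq_sum, ← Real.sqrt_sq_eq_abs]
    simp
  have hx : ‖replicateCol Unit x‖ ^ 2 = x ⬝ᵥ x := by
    rw [frobenius_norm_sq_eq_sum]; simp [dotProduct, sq]
  have h := (frobenius_norm_mul _ _).trans (mul_le_mul_of_nonneg_left
    (frobenius_norm_mul E (replicateCol Unit x)) (norm_nonneg (replicateRow Unit x)))
  rw [hq, ← transpose_replicateCol, frobenius_norm_transpose] at h
  calc x ⬝ᵥ (E *ᵥ x) ≤ |x ⬝ᵥ (E *ᵥ x)| := le_abs_self _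
    _ ≤ ‖replicateCol Unit x‖ * (‖E‖ * ‖replicateCol Unit x‖) := h
    _ = ‖E‖ * (x ⬝ᵥ x) := by rw [← hx]; ring

theorem frobenius_norm_transpose_mul_self_sub_le (A B : Matrix α β ℝ) :
    ‖Bᵀ * B - Aᵀ * A‖ ≤ (‖B‖ + ‖A‖) * ‖B - A‖ := by
  have h : Bᵀ * B - Aᵀ * A = Bᵀ * (B - A) + (B - A)ᵀ * A := by
    rw [transpose_sub, Matrix.mul_sub, Matrix.sub_mul]; abel
  calc ‖Bᵀ * B - Aᵀ * A‖ ≤ ‖Bᵀ‖ * ‖B - A‖ + ‖(B - A)ᵀ‖ * ‖A‖ :=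
        h ▸ (norm_add_le _ _).trans (add_le_add (frobenius_norm_mul _ _) (frobenius_norm_mul _ _))
    _ = (‖B‖ + ‖A‖) * ‖B - A‖ := by simp only [frobenius_norm_transpose]; ring

theorem frobenius_norm_mul_transpose_self_sub_le (A B : Matrix α β ℝ) :
    ‖B * Bᵀ - A * Aᵀ‖ ≤ (‖B‖ + ‖A‖) * ‖B - A‖ := by
  simpa [← transpose_sub, frobenius_norm_transpose] using
    frobenius_norm_transpose_mul_self_sub_le Aᵀ Bᵀ

theorem mul_frobenius_norm_le_norm_hadamard {A W : Matrix α β ℝ} {lam : ℝ} (hlam : 0 ≤ lam)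
    (hW : ∀ i j, lam ≤ W i j) : lam * ‖A‖ ≤ ‖A ⊙ W‖ := by
  rw [← Real.norm_of_nonneg hlam, ← norm_smul, ← one_mul ‖A ⊙ W‖]
  refine frobenius_norm_le_mul_of_abs_le zero_le_one fun i j => ?_
  rw [Matrix.smul_apply, hadamard_apply, smul_eq_mul, one_mul, abs_mul, abs_mul, mul_comm,
    abs_of_nonneg hlam]
  exact mul_le_mul_of_nonneg_left ((hW i j).trans (le_abs_self _)) (abs_nonneg _)

theorem frobenius_norm_hadamard_le {A W : Matrix α β ℝ} {ρ : ℝ} (hρ : 0 ≤ ρ)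
    (hW : ∀ i j, |W i j| ≤ ρ) : ‖A ⊙ W‖ ≤ ρ * ‖A‖ :=
  frobenius_norm_le_mul_of_abs_le hρ fun i j => by
    rw [hadamard_apply, abs_mul, mul_comm]
    exact mul_le_mul_of_nonneg_right (hW i j) (abs_nonneg _)

theorem frobenius_norm_diagonal_commutator_le [DecidableEq α] {d a b : α → ℝ}
    (K : Matrix α α ℝ) {g : ℝ} (hg : 0 < g) (h : ∀ i j, g * |d i - d j| ≤ |a i - b j|) :
    ‖diagonal d * K - K * diagonal d‖ ≤ g⁻¹ * ‖diagonal a * K - K * diagonal b‖ := by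
  have entry (c e : α → ℝ) (i j : α) :
      (diagonal c * K - K * diagonal e) i j = (c i - e j) * K i j := by
    simp only [Matrix.sub_apply, diagonal_mul, mul_diagonal]; ring
  refine frobenius_norm_le_mul_of_abs_le (inv_nonneg.mpr hg.le) fun i j => ?_
  rw [entry, entry, abs_mul, abs_mul, ← mul_assoc]
  gcongr
  rw [le_inv_mul_iff₀ hg]
  exact h i j

theorem dotProduct_conj_diagonal_mulVec [DecidableEq α] (U : Matrix α α ℝ) (d x : α → ℝ) :
    x ⬝ᵥ ((U * diagonal d * Uᵀ) *ᵥ x) = ∑ i, d i * (Uᵀ *ᵥ x) i ^ 2 := by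
  rw [← mulVec_mulVec, ← mulVec_mulVec, dotProduct_mulVec, ← mulVec_transpose]
  simp only [dotProduct, mulVec_diagonal]
  exact Finset.sum_congr rfl fun i _ => by ring

theorem sum_sq_transpose_mulVec [DecidableEq α] {U : Matrix α α ℝ} (hU : U * Uᵀ = 1) (x : α → ℝ) :
    ∑ i, (Uᵀ *ᵥ x) i ^ 2 = x ⬝ᵥ x := by
  have h : (Uᵀ *ᵥ x) ⬝ᵥ (Uᵀ *ᵥ x) = x ⬝ᵥ x := by
    rw [mulVec_transpose, ← dotProduct_mulVec, ← mulVec_transpose, mulVec_mulVec, hU,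
      one_mulVec]
  simpa [dotProduct, sq] using h

end Frobenius

theorem rank_fromCols_zero_le {m k l : ℕ} (A : Matrix (Fin m) (Fin k) ℝ) :
    (Matrix.fromCols A (0 : Matrix (Fin m) (Fin l) ℝ)).rank ≤ A.rank := by
  have : Matrix.fromCols A (0 : Matrix (Fin m) (Fin l) ℝ) =
      A * Matrix.fromCols (1 : Matrix (Fin k) (Fin k) ℝ) (0 : Matrix (Fin k) (Fin l) ℝ) := by
    rw [Matrix.mul_fromCols, Matrix.mul_one, Matrix.mul_zero]
  rw [this]
  exact rank_mul_le_left _ _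

theorem isUnit_det_transpose_mul_self {m k : ℕ} {A : Matrix (Fin m) (Fin k) ℝ}
    (hA : A.rank = k) : IsUnit (Aᵀ * A).det := by
  rw [← isUnit_iff_isUnit_det, ← linearIndependent_cols_iff_isUnit,
    linearIndependent_iff_card_eq_finrank_span, Set.finrank, ← rank_eq_finrank_span_cols,
    rank_transpose_mul_self, hA, Fintype.card_fin]

theorem exists_ne_zero_mulVec_eq_zero_above_below {ι K : Type*} [Fintype ι] [LinearOrder ι]
    [Field K] (P Q : Matrix ι ι K) (i : ι) :
    ∃ x ≠ 0, (∀ a, i < a → (P *ᵥ x) a = 0) ∧ (∀ a, a < i → (Q *ᵥ x) a = 0) := by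
  let C : Matrix {a // a ≠ i} ι K := of fun a => if i < a.1 then P a.1 else Q a.1
  have hker : LinearMap.ker C.mulVecLin ≠ ⊥ := LinearMap.ker_ne_bot_of_finrank_lt (by
    simpa only [Module.finrank_fintype_fun_eq_card] using
      Fintype.card_subtype_lt (p := (· ≠ i)) (not_not.mpr rfl))
  obtain ⟨x, hx, hx0⟩ := Submodule.ne_bot_iff _ |>.mp hker
  have hCx (a : ι) (ha : a ≠ i) : (C *ᵥ x) ⟨a, ha⟩ = 0 := by
    rw [LinearMap.mem_ker, mulVecLin_apply] at hx; rw [hx]; rfl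
  refine ⟨x, hx0, fun a ha => ?_, fun a ha => ?_⟩
  · simpa [C, mulVec, ha] using hCx a ha.ne'
  · simpa [C, mulVec, not_lt.mpr ha.le] using hCx a ha.ne

end Matrix

section Antitone

variable {ι : Type*} [Fintype ι] [LinearOrder ι] {d y : ι → ℝ}

theorem mul_sum_sq_le_sum_mul_sq (hd : Antitone d) {i : ι} (hy : ∀ a, i < a → y a = 0) :
    d i * ∑ a, y a ^ 2 ≤ ∑ a, d a * y a ^ 2 := by
  rw [Finset.mul_sum]
  refine Finset.sum_le_sum fun a _ => ?_
  rcases le_or_gt a i with hai | hai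
  · exact mul_le_mul_of_nonneg_right (hd hai) (sq_nonneg _)
  · simp [hy a hai]

theorem sum_mul_sq_le_mul_sum_sq (hd : Antitone d) {i : ι} (hy : ∀ a, a < i → y a = 0) :
    ∑ a, d a * y a ^ 2 ≤ d i * ∑ a, y a ^ 2 := by
  rw [Finset.mul_sum]
  refine Finset.sum_le_sum fun a _ => ?_
  rcases le_or_gt i a with hai | hai
  · exact mul_le_mul_of_nonneg_right (hd hai) (sq_nonneg _)
  · simp [hy a hai]

end Antitone

theorem norm_sub_le_of_weighted_error_le {α β γ : Type*} [Fintype α] [Fintype β] [Fintype γ]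
    {A1 X1 W1 : Matrix α β ℝ} {A2 X2 W2 : Matrix α γ ℝ} {lam ρ : ℝ} (hlam : 0 < lam)
    (hρ : 0 ≤ ρ) (hW1 : ∀ i j, lam ≤ W1 i j) (hW2 : ∀ i j, |W2 i j| ≤ ρ)
    (hle : ‖(A1 - X1) ⊙ W1‖ ^ 2 + ‖(A2 - X2) ⊙ W2‖ ^ 2 ≤ ‖A2 ⊙ W2‖ ^ 2) :
    ‖X1 - A1‖ ≤ ρ * ‖A2‖ / lam := by
  have h1 : lam * ‖A1 - X1‖ ≤ ‖(A1 - X1) ⊙ W1‖ := mul_frobenius_norm_le_norm_hadamard hlam.le hW1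
  have h2 : ‖A2 ⊙ W2‖ ≤ ρ * ‖A2‖ := frobenius_norm_hadamard_le hρ hW2
  have h3 : ‖(A1 - X1) ⊙ W1‖ ≤ ‖A2 ⊙ W2‖ :=
    pow_le_pow_iff_left₀ (norm_nonneg _) (norm_nonneg _) two_ne_zero |>.mp
      (by nlinarith [sq_nonneg ‖(A2 - X2) ⊙ W2‖])
  rw [norm_sub_rev, le_div_iff₀ hlam, mul_comm]
  linarith

section ProjCol

variable {m k : ℕ}

theorem norm_projCol_sub_le {A B : Matrix (Fin m) (Fin k) ℝ} (hA : IsUnit (Aᵀ * A).det)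
    (hB : IsUnit (Bᵀ * B).det) {c : ℝ} (hcA : ‖(Aᵀ * A)⁻¹‖ ≤ c) (hcB : ‖(Bᵀ * B)⁻¹‖ ≤ c) :
    ‖projCol B - projCol A‖ ≤ c * (‖B‖ + ‖A‖) * (1 + c * ‖A‖ * ‖B‖) * ‖B - A‖ := by
  set GA := Aᵀ * A
  set GB := Bᵀ * B
  have hc : 0 ≤ c := (norm_nonneg _).trans hcA
  have hinv : GB⁻¹ - GA⁻¹ = GB⁻¹ * (GA - GB) * GA⁻¹ :=
    inv_sub_inv (by simp only [isUnit_iff_isUnit_det, hA, hB])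
  have hinv_le : ‖GB⁻¹ - GA⁻¹‖ ≤ c * ((‖B‖ + ‖A‖) * ‖B - A‖) * c := by
    rw [hinv]
    exact (frobenius_norm_mul_mul_le _ _ _).trans
      (by rw [norm_sub_rev]; gcongr; exact frobenius_norm_transpose_mul_self_sub_le A B)
  have hsplit : projCol B - projCol A =
      (B - A) * GB⁻¹ * Bᵀ + A * (GB⁻¹ - GA⁻¹) * Bᵀ + A * GA⁻¹ * (B - A)ᵀ := by
    simp only [projCol, transpose_sub, Matrix.sub_mul, Matrix.mul_sub, GA, GB]
    abel
  calc ‖projCol B - projCol A‖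
      ≤ ‖(B - A) * GB⁻¹ * Bᵀ‖ + ‖A * (GB⁻¹ - GA⁻¹) * Bᵀ‖ + ‖A * GA⁻¹ * (B - A)ᵀ‖ :=
        hsplit ▸ norm_add₃_le
    _ ≤ ‖B - A‖ * c * ‖B‖ + ‖A‖ * (c * ((‖B‖ + ‖A‖) * ‖B - A‖) * c) * ‖B‖
          + ‖A‖ * c * ‖B - A‖ := by
        gcongr <;>
          exact (frobenius_norm_mul_mul_le _ _ _).trans
            (by rw [frobenius_norm_transpose]; gcongr)
    _ = c * (‖B‖ + ‖A‖) * (1 + c * ‖A‖ * ‖B‖) * ‖B - A‖ := by ring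

theorem exists_norm_projCol_sub_le {A : Matrix (Fin m) (Fin k) ℝ} (hA : IsUnit (Aᵀ * A).det) :
    ∃ ε > 0, ∃ L ≥ 0, ∀ B, ‖B - A‖ ≤ ε → ‖projCol B - projCol A‖ ≤ L * ‖B - A‖ := by
  have hgram : Continuous fun B : Matrix (Fin m) (Fin k) ℝ => Bᵀ * B :=
    continuous_id.matrix_transpose.matrix_mul continuous_id
  have hinv : ContinuousAt (fun B : Matrix (Fin m) (Fin k) ℝ => (Bᵀ * B)⁻¹) A :=
    (continuousAt_matrix_inv _ (NormedRing.inverse_continuousAt hA.unit)).comp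
      (f := fun B : Matrix (Fin m) (Fin k) ℝ => Bᵀ * B) hgram.continuousAt
  set c := ‖(Aᵀ * A)⁻¹‖ + 1
  have hev : ∀ᶠ B in 𝓝 A, IsUnit (Bᵀ * B).det ∧ ‖(Bᵀ * B)⁻¹‖ ≤ c ∧ ‖B - A‖ ≤ 1 := by
    refine ((hgram.matrix_det.continuousAt.eventually_ne hA.ne_zero).and
      ((hinv.eventually (Metric.closedBall_mem_nhds _ one_pos)).and
        (Metric.closedBall_mem_nhds A one_pos))).mono fun B ⟨hdet, hB, hBA⟩ => ?_
    rw [dist_eq_norm] at hB hBA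
    refine ⟨isUnit_iff_ne_zero.mpr hdet, ?_, hBA⟩
    linarith [norm_le_norm_add_norm_sub' ((Bᵀ * B)⁻¹) ((Aᵀ * A)⁻¹)]
  obtain ⟨ε, hε, hball⟩ := Metric.nhds_basis_closedBall.eventually_iff.mp hev
  refine ⟨ε, hε, c * (‖A‖ + 1 + ‖A‖) * (1 + c * ‖A‖ * (‖A‖ + 1)), by positivity, fun B hB => ?_⟩
  obtain ⟨hBu, hBc, hB1⟩ := hball (by rwa [Metric.mem_closedBall, dist_eq_norm])
  have hBn : ‖B‖ ≤ ‖A‖ + 1 := by linarith [norm_le_norm_add_norm_sub' B A]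
  exact (norm_projCol_sub_le hA hBu (by linarith) hBc).trans (by gcongr)

end ProjCol

section SVD

variable {m l : ℕ}

/-- The `i`-th eigenvalue of `M * Mᵀ` when `M` has singular values `σ`; note that `i` starts at
`0` while `σ` is indexed from `1`. -/
def gramEig (l : ℕ) (σ : ℕ → ℝ) (i : ℕ) : ℝ := if i < l then σ (i + 1) ^ 2 else 0

def leadingIndicator (m r : ℕ) : Fin m → ℝ := fun i => if (i : ℕ) < r then 1 else 0

def leadingProj (U : Matrix (Fin m) (Fin m) ℝ) (r : ℕ) : Matrix (Fin m) (Fin m) ℝ :=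
  U * diagonal (leadingIndicator m r) * Uᵀ

theorem gramEig_le_sq_succ (l : ℕ) (σ : ℕ → ℝ) (r : ℕ) : gramEig l σ r ≤ σ (r + 1) ^ 2 := by
  unfold gramEig; split_ifs; exacts [le_rfl, sq_nonneg _]

theorem gramEig_sub_one {σ : ℕ → ℝ} {r : ℕ} (hr : 1 ≤ r) (hrl : r ≤ l) :
    gramEig l σ (r - 1) = σ r ^ 2 := by
  rw [gramEig, if_pos (by omega), Nat.sub_add_cancel hr]

theorem svdDiag_mul_transpose (σ : ℕ → ℝ) :
    svdDiag m l σ * (svdDiag m l σ)ᵀ = diagonal fun i : Fin m => gramEig l σ i := by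
  ext i j
  simp only [mul_apply, svdDiag, transpose_apply, of_apply, diagonal_apply, gramEig]
  by_cases hil : (i : ℕ) < l
  · rw [Finset.sum_eq_single ⟨i, hil⟩ (fun b _ hb => by
        rw [if_neg fun h => hb (Fin.ext h.symm), zero_mul]) (by simp)]
    by_cases hij : i = j
    · subst hij; simp [hil, sq]
    · simp [hij, Fin.val_inj, eq_comm]
  · rw [Finset.sum_eq_zero fun b _ => by rw [if_neg (by omega), zero_mul]]
    simp [hil]

theorem diagonal_leadingIndicator_mul_svdDiag (σ : ℕ → ℝ) (r : ℕ) :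
    diagonal (leadingIndicator m r) * svdDiag m l σ = svdTrunc m l r σ := by
  ext i j
  simp only [diagonal_mul, leadingIndicator, svdDiag, svdTrunc, of_apply]
  split_ifs <;> simp_all; omega

theorem svdTrunc_zero (σ : ℕ → ℝ) : svdTrunc m l 0 σ = 0 := by
  ext; simp [svdTrunc]

theorem norm_leadingProj_le {U : Matrix (Fin m) (Fin m) ℝ} (hU : Uᵀ * U = 1) (r : ℕ) :
    ‖leadingProj U r‖ ≤ ‖(1 : Matrix (Fin m) (Fin m) ℝ)‖ := by
  rw [leadingProj, Matrix.mul_assoc, frobenius_norm_orthogonal_mul hU,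
    frobenius_norm_mul_orthogonal (by rwa [transpose_transpose]), ← one_mul ‖(1 : Matrix _ _ ℝ)‖]
  refine frobenius_norm_le_mul_of_abs_le zero_le_one fun i j => ?_
  rw [one_mul, ← diagonal_one, diagonal_apply, diagonal_apply]
  unfold leadingIndicator
  split_ifs <;> simp

namespace IsSVD

variable {M M' : Matrix (Fin m) (Fin l) ℝ} {U U' : Matrix (Fin m) (Fin m) ℝ} {σ σ' : ℕ → ℝ}
  {V V' : Matrix (Fin l) (Fin l) ℝ}

theorem gramEig_antitone (h : IsSVD M U σ V) : Antitone (gramEig l σ) := by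
  intro i j hij
  unfold gramEig
  split_ifs with hj hi hi
  · exact pow_le_pow_left₀ (h.nonneg _ (by omega)) (h.anti _ _ (by omega) (by omega)) 2
  · omega
  · positivity
  · rfl

theorem mul_transpose_eq (h : IsSVD M U σ V) :
    M * Mᵀ = U * diagonal (fun i : Fin m => gramEig l σ i) * Uᵀ := by
  rw [h.hM, ← svdDiag_mul_transpose]
  simp only [transpose_mul, transpose_transpose, Matrix.mul_assoc]
  rw [← Matrix.mul_assoc Vᵀ, h.hVl, Matrix.one_mul]

theorem svdTrunc_eq (h : IsSVD M U σ V) (r : ℕ) :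
    U * svdTrunc m l r σ * Vᵀ = leadingProj U r * M := by
  rw [h.hM, leadingProj, ← diagonal_leadingIndicator_mul_svdDiag]
  simp only [Matrix.mul_assoc]
  rw [← Matrix.mul_assoc Uᵀ, h.hUl, Matrix.one_mul]

theorem dotProduct_mul_transpose_mulVec (h : IsSVD M U σ V) (x : Fin m → ℝ) :
    x ⬝ᵥ ((M * Mᵀ) *ᵥ x) = ∑ a : Fin m, gramEig l σ a * (Uᵀ *ᵥ x) a ^ 2 := by
  rw [h.mul_transpose_eq, dotProduct_conj_diagonal_mulVec]

theorem gramEig_le_add (h : IsSVD M U σ V) (h' : IsSVD M' U' σ' V') (i : Fin m) :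
    gramEig l σ' i ≤ gramEig l σ i + ‖M' * M'ᵀ - M * Mᵀ‖ := by
  -- Courant–Fischer: a test vector in the span of the leading `i + 1` columns of `U'` and of the
  -- trailing `m - i` columns of `U`.
  obtain ⟨x, hx0, habove, hbelow⟩ := exists_ne_zero_mulVec_eq_zero_above_below U'ᵀ Uᵀ i
  have hxx : 0 < x ⬝ᵥ x :=
    (Finset.sum_nonneg fun a _ => mul_self_nonneg (x a)).lt_of_ne
      (Ne.symm (dotProduct_self_eq_zero.not.mpr hx0))
  have hanti (τ : ℕ → ℝ) (hτ : Antitone (gramEig l τ)) :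
      Antitone fun a : Fin m => gramEig l τ a := hτ.comp_monotone Fin.val_strictMono.monotone
  have hlower : gramEig l σ' i * (x ⬝ᵥ x) ≤ x ⬝ᵥ ((M' * M'ᵀ) *ᵥ x) := by
    rw [h'.dotProduct_mul_transpose_mulVec, ← sum_sq_transpose_mulVec h'.hUr]
    exact mul_sum_sq_le_sum_mul_sq (hanti σ' h'.gramEig_antitone) habove
  have hupper : x ⬝ᵥ ((M * Mᵀ) *ᵥ x) ≤ gramEig l σ i * (x ⬝ᵥ x) := by
    rw [h.dotProduct_mul_transpose_mulVec, ← sum_sq_transpose_mulVec h.hUr]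
    exact sum_mul_sq_le_mul_sum_sq (hanti σ h.gramEig_antitone) hbelow
  have hpert : x ⬝ᵥ ((M' * M'ᵀ) *ᵥ x) - x ⬝ᵥ ((M * Mᵀ) *ᵥ x) ≤
      ‖M' * M'ᵀ - M * Mᵀ‖ * (x ⬝ᵥ x) := by
    rw [← dotProduct_sub, ← sub_mulVec]
    exact dotProduct_mulVec_le_frobenius_norm_mul _ x
  nlinarith

theorem gap_le_abs_gramEig_sub (h : IsSVD M U σ V) (h' : IsSVD M' U' σ' V') {r : ℕ}
    (hrl : r ≤ l) {i j : Fin m} (hij : (i : ℕ) < r ↔ r ≤ j) :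
    σ r ^ 2 - σ (r + 1) ^ 2 - ‖M' * M'ᵀ - M * Mᵀ‖ ≤ |gramEig l σ' i - gramEig l σ j| := by
  have hσ := gramEig_le_sq_succ l σ r
  rcases lt_or_ge (i : ℕ) r with hi | hi
  · have hj := hij.mp hi
    have h1 : gramEig l σ' (r - 1) ≤ gramEig l σ' i := h'.gramEig_antitone (by omega)
    have h2 := h'.gramEig_le_add h ⟨r - 1, by omega⟩
    have h3 : gramEig l σ j ≤ gramEig l σ r := h.gramEig_antitone hj
    rw [Fin.val_mk, gramEig_sub_one (by omega) hrl, norm_sub_rev] at h2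
    linarith [le_abs_self (gramEig l σ' i - gramEig l σ j)]
  · have hj : (j : ℕ) < r := not_le.mp (hij.not.mp hi.not_gt)
    have h1 : gramEig l σ' i ≤ gramEig l σ' r := h'.gramEig_antitone hi
    have h2 := h.gramEig_le_add h' ⟨r, by omega⟩
    have h3 : gramEig l σ (r - 1) ≤ gramEig l σ j := h.gramEig_antitone (by omega)
    rw [gramEig_sub_one (by omega) hrl] at h3
    linarith [neg_abs_le (gramEig l σ' i - gramEig l σ j)]

theorem norm_leadingProj_sub_le (h : IsSVD M U σ V) (h' : IsSVD M' U' σ' V') {r : ℕ}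
    (hrl : r ≤ l) (hδ : 0 < σ r ^ 2 - σ (r + 1) ^ 2)
    (hE : ‖M' * M'ᵀ - M * Mᵀ‖ ≤ (σ r ^ 2 - σ (r + 1) ^ 2) / 2) :
    ‖leadingProj U' r - leadingProj U r‖ ≤
      2 / (σ r ^ 2 - σ (r + 1) ^ 2) * ‖M' * M'ᵀ - M * Mᵀ‖ := by
  -- Davis–Kahan: after conjugation both sides are commutators of `U'ᵀ * U` with diagonal
  -- matrices, and the entries where the two indicators differ see the spectral gap.
  rw [leadingProj, leadingProj, frobenius_norm_conj_sub_conj h.hUl h.hUr h'.hUl h'.hUr,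
    h.mul_transpose_eq, h'.mul_transpose_eq,
    frobenius_norm_conj_sub_conj h.hUl h.hUr h'.hUl h'.hUr, ← inv_div]
  refine frobenius_norm_diagonal_commutator_le _ (half_pos hδ) fun i j => ?_
  by_cases hij : (i : ℕ) < r ↔ r ≤ j
  · have hgap := h.gap_le_abs_gramEig_sub h' hrl hij
    have hind : |leadingIndicator m r i - leadingIndicator m r j| ≤ 1 := by
      unfold leadingIndicator; split_ifs <;> norm_num
    nlinarith [abs_nonneg (leadingIndicator m r i - leadingIndicator m r j)]
  · have hind : leadingIndicator m r i = leadingIndicator m r j := by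
      unfold leadingIndicator; split_ifs <;> first | rfl | omega
    rw [hind, sub_self, abs_zero, mul_zero]
    exact abs_nonneg _

theorem exists_norm_svdTrunc_sub_le (h : IsSVD M U σ V) {r : ℕ} (hrl : r ≤ l)
    (hgap : σ (r + 1) < σ r) :
    ∃ ε > 0, ∃ K ≥ 0, ∀ (M' : Matrix (Fin m) (Fin l) ℝ) U' σ' V', IsSVD M' U' σ' V' →
      ‖M' - M‖ ≤ ε →
        ‖U' * svdTrunc m l r σ' * V'ᵀ - U * svdTrunc m l r σ * Vᵀ‖ ≤ K * ‖M' - M‖ := by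
  rcases Nat.eq_zero_or_pos r with rfl | hr
  · refine ⟨1, one_pos, 0, le_rfl, fun M' U' σ' V' _ _ => ?_⟩
    simp [svdTrunc_zero]
  set δ := σ r ^ 2 - σ (r + 1) ^ 2
  have hδ : 0 < δ := by nlinarith [h.nonneg (r + 1) (by omega)]
  set b := 2 * ‖M‖ + 1
  have hb : 0 < b := by positivity
  refine ⟨min 1 (δ / (2 * b)), by positivity,
    ‖(1 : Matrix (Fin m) (Fin m) ℝ)‖ + 2 / δ * b * ‖M‖, by positivity,
    fun M' U' σ' V' h' hM' => ?_⟩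
  have hE : ‖M' * M'ᵀ - M * Mᵀ‖ ≤ b * ‖M' - M‖ :=
    (frobenius_norm_mul_transpose_self_sub_le M M').trans <| by
      gcongr
      linarith [norm_le_norm_add_norm_sub' M' M, hM'.trans (min_le_left _ _)]
  have hEδ : ‖M' * M'ᵀ - M * Mᵀ‖ ≤ δ / 2 :=
    hE.trans <| (mul_le_mul_of_nonneg_left (hM'.trans (min_le_right _ _)) hb.le).trans_eq
      (by field_simp)
  have hP := h.norm_leadingProj_sub_le h' hrl hδ hEδ
  have hsplit : leadingProj U' r * M' - leadingProj U r * M =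
      leadingProj U' r * (M' - M) + (leadingProj U' r - leadingProj U r) * M := by
    rw [Matrix.mul_sub, Matrix.sub_mul]; abel
  rw [h.svdTrunc_eq, h'.svdTrunc_eq]
  calc ‖leadingProj U' r * M' - leadingProj U r * M‖
      ≤ ‖leadingProj U' r‖ * ‖M' - M‖ + ‖leadingProj U' r - leadingProj U r‖ * ‖M‖ :=
        hsplit ▸ (norm_add_le _ _).trans
          (add_le_add (frobenius_norm_mul _ _) (frobenius_norm_mul _ _))
    _ ≤ ‖(1 : Matrix (Fin m) (Fin m) ℝ)‖ * ‖M' - M‖ + 2 / δ * (b * ‖M' - M‖) * ‖M‖ := by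
        gcongr
        · exact norm_leadingProj_le h'.hUl r
        · exact hP.trans (by gcongr)
    _ = (‖(1 : Matrix (Fin m) (Fin m) ℝ)‖ + 2 / δ * b * ‖M‖) * ‖M' - M‖ := by ring

end IsSVD

end SVD

/-- **Lemma 3.8.** With `𝒜 = P⊥_{A1}(A2)` having a singular value gap
`σ_{r-k} > σ_{r-k+1}`, and `𝒜̃ = P⊥_{X̃1(W)}(A2)` for minimizers `(X̃1(W) X̃2(W))` of the
weighted problem (`W1` positive, `W2` bounded by `ρ`),
`‖H_{r-k}(𝒜̃) − H_{r-k}(𝒜)‖ = O(1/λ)` as `λ = min_{i,j}(W1)_{ij} → ∞`. -/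
theorem stmt_8 {m k l : ℕ}
    (A1 : Matrix (Fin m) (Fin k) ℝ) (A2 : Matrix (Fin m) (Fin l) ℝ)
    (r : ℕ) (hrank : A1.rank = k) (hkr : k ≤ r) (hrmn : r ≤ min m (k + l))
    (U : Matrix (Fin m) (Fin m) ℝ) (σ : ℕ → ℝ) (V : Matrix (Fin l) (Fin l) ℝ)
    (hsvd : IsSVD ((1 - projCol A1) * A2) U σ V)
    (hgap : σ (r - k + 1) < σ (r - k))
    (ρ : ℝ) (hρ : 0 < ρ) :
    ∃ C > (0 : ℝ), ∃ lam0 > (0 : ℝ),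
      ∀ (W1 : Matrix (Fin m) (Fin k) ℝ) (W2 : Matrix (Fin m) (Fin l) ℝ) (lam : ℝ)
        (X1 : Matrix (Fin m) (Fin k) ℝ) (X2 : Matrix (Fin m) (Fin l) ℝ),
        (∀ i j, 0 < W1 i j) → (∀ i j, |W2 i j| ≤ ρ) →
        (∀ i j, lam ≤ W1 i j) → (∃ i j, W1 i j = lam) → lam0 ≤ lam →
        ((Matrix.fromCols X1 X2).rank ≤ r ∧
          ∀ (Y1 : Matrix (Fin m) (Fin k) ℝ) (Y2 : Matrix (Fin m) (Fin l) ℝ),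
            (Matrix.fromCols Y1 Y2).rank ≤ r →
            frob (Matrix.hadamard (A1 - X1) W1) ^ 2 +
                frob (Matrix.hadamard (A2 - X2) W2) ^ 2 ≤
              frob (Matrix.hadamard (A1 - Y1) W1) ^ 2 +
                frob (Matrix.hadamard (A2 - Y2) W2) ^ 2) →
        ∀ (Ut : Matrix (Fin m) (Fin m) ℝ) (σt : ℕ → ℝ) (Vt : Matrix (Fin l) (Fin l) ℝ),
          IsSVD ((1 - projCol X1) * A2) Ut σt Vt →
          frob (Ut * svdTrunc m l (r - k) σt * Vtᵀ - U * svdTrunc m l (r - k) σ * Vᵀ) ≤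
            C / lam := by
  obtain ⟨εP, hεP, L, hL, hproj⟩ :=
    exists_norm_projCol_sub_le (isUnit_det_transpose_mul_self hrank)
  obtain ⟨εH, hεH, K, hK, htrunc⟩ :=
    hsvd.exists_norm_svdTrunc_sub_le (r := r - k) (by omega) hgap
  set a := ‖A2‖
  refine ⟨max 1 (K * L * ρ * a ^ 2), by positivity,
    max 1 (max (ρ * a / εP) (L * ρ * a ^ 2 / εH)), by positivity, ?_⟩
  intro W1 W2 lam X1 X2 _ hW2 hW1 _ hlam ⟨_, hmin⟩ Ut σt Vt hsvdt
  simp only [frob_eq_norm] at hmin ⊢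
  have hlam0 : 0 < lam := one_pos.trans_le ((le_max_left _ _).trans hlam)
  have hεPlam : ρ * a / lam ≤ εP := (div_le_comm₀ hlam0 hεP).mpr
    ((le_max_left _ _).trans ((le_max_right _ _).trans hlam))
  have hεHlam : L * ρ * a ^ 2 / lam ≤ εH := (div_le_comm₀ hlam0 hεH).mpr
    ((le_max_right _ _).trans ((le_max_right _ _).trans hlam))
  have hX : ‖X1 - A1‖ ≤ ρ * a / lam := by
    refine norm_sub_le_of_weighted_error_le (X2 := X2) hlam0 hρ.le hW1 hW2 ?_
    simpa using hmin A1 0 ((rank_fromCols_zero_le A1).trans (hrank.trans_le hkr))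
  have hM : ‖(1 - projCol X1) * A2 - (1 - projCol A1) * A2‖ ≤ L * ρ * a ^ 2 / lam := by
    rw [← Matrix.sub_mul, sub_sub_sub_cancel_left, ← neg_sub, Matrix.neg_mul, norm_neg]
    calc ‖(projCol X1 - projCol A1) * A2‖ ≤ L * ‖X1 - A1‖ * a :=
          (frobenius_norm_mul _ _).trans (by gcongr; exact hproj X1 (hX.trans hεPlam))
      _ ≤ L * (ρ * a / lam) * a := by gcongr
      _ = L * ρ * a ^ 2 / lam := by ring
  calc _ ≤ K * (L * ρ * a ^ 2 / lam) := (htrunc _ _ _ _ hsvdt (hM.trans hεHlam)).trans (by gcongr)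
    _ ≤ max 1 (K * L * ρ * a ^ 2) / lam := by
        rw [mul_div_assoc', ← mul_assoc, ← mul_assoc]
        gcongr
        exact le_max_right _ _
end

section
/- Let A1 ∈ ℝ^{m×k}, A2 ∈ ℝ^{m×(n−k)}, W1 ∈ ℝ^{m×k} with positive entries, and define F(X1, C, B, D) = ‖(A1 − X1) ⊙ W1‖_F² + ‖A2 − X1·C − B·D‖_F² for X1 ∈ ℝ^{m×k}, C ∈ ℝ^{k×(n−k)}, B ∈ ℝ^{m×(r−k)}, D ∈ ℝ^{(r−k)×(n−k)}. Suppose sequences (X1)_p, C_p, B_p, D_p satisfy, for every p, the first-order stationarity equations: ((X1)_{p+1} − A1) ⊙ W1 ⊙ W1 = (A2 − (X1)_{p+1}C_p − B_pD_p)C_pᵀ; (X1)_{p+1}ᵀ(A2 − (X1)_{p+1}C_{p+1} − B_pD_p) = 0; (A2 − (X1)_{p+1}C_{p+1} − B_{p+1}D_p)D_pᵀ = 0; and B_{p+1}ᵀ(A2 − (X1)_{p+1}C_{p+1} − B_{p+1}D_{p+1}) = 0. Then with m_p = F((X1)_p, C_p, B_p, D_p), one has m_p − m_{p+1} = ‖((X1)_p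 − (X1)_{p+1}) ⊙ W1‖_F² + ‖((X1)_p − (X1)_{p+1})C_p‖_F² + ‖(X1)_{p+1}(C_p − C_{p+1})‖_F² + ‖(B_p − B_{p+1})D_p‖_F² + ‖B_{p+1}(D_p − D_{p+1})‖_F². -/
open Matrix Filter Topology

section Aux

noncomputable def gnorm {α β : Type*} [Fintype α] [Fintype β] (M : Matrix α β ℝ) : ℝ :=
  ∑ i, ∑ j, (M i j)^2

noncomputable def ip {α β : Type*} [Fintype α] [Fintype β] (M N : Matrix α β ℝ) : ℝ :=
  ∑ i, ∑ j, M i j * N i j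

variable {α β γ : Type*} [Fintype α] [Fintype β] [Fintype γ]

lemma frob_sq_s12 (M : Matrix α β ℝ) : frob M ^ 2 = gnorm M := by
  unfold frob gnorm
  rw [Real.sq_sqrt]
  positivity

lemma gnorm_sub (U V : Matrix α β ℝ) :
    gnorm (U - V) = gnorm U - 2 * ip U V + gnorm V := by
  unfold gnorm ip
  simp only [Finset.mul_sum, ← Finset.sum_sub_distrib, ← Finset.sum_add_distrib,
    Matrix.sub_apply]
  exact Finset.sum_congr rfl fun i _ => Finset.sum_congr rfl fun j _ => by ring

lemma ip_mul (M : Matrix α β ℝ) (P : Matrix α γ ℝ) (Q : Matrix γ β ℝ) :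
    ip M (P * Q) = ip P (M * Qᵀ) := by
  unfold ip
  simp only [Matrix.mul_apply, Matrix.transpose_apply, Finset.mul_sum]
  refine Finset.sum_congr rfl fun i _ => ?_
  rw [Finset.sum_comm]
  exact Finset.sum_congr rfl fun t _ => Finset.sum_congr rfl fun j _ => by ring

lemma ip_transpose (M N : Matrix α β ℝ) : ip Mᵀ Nᵀ = ip M N := by
  unfold ip
  simp only [Matrix.transpose_apply]
  exact Finset.sum_comm

lemma ip_mul_left (M : Matrix α β ℝ) (P : Matrix α γ ℝ) (Q : Matrix γ β ℝ) :
    ip M (P * Q) = ip Q (Pᵀ * M) := by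
  rw [← ip_transpose M (P * Q), Matrix.transpose_mul, ip_mul, Matrix.transpose_transpose,
    ← ip_transpose Q (Pᵀ * M), Matrix.transpose_mul, Matrix.transpose_transpose]

lemma ip_zero (M : Matrix α β ℝ) : ip M 0 = 0 := by
  unfold ip; simp

end Aux

/-- **Theorem 4.1.** For the alternating minimization of
`F(X1, C, B, D) = ‖(A1 − X1) ⊙ W1‖_F² + ‖A2 − X1·C − B·D‖_F²`, with `m_p = F((X1)_p, C_p, B_p, D_p)`,
`m_p − m_{p+1}` equals the sum of the five squared Frobenius norms below. -/
theorem stmt_12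
    {m k l s : ℕ}
    (A1 : Matrix (Fin m) (Fin k) ℝ) (A2 : Matrix (Fin m) (Fin l) ℝ)
    (W1 : Matrix (Fin m) (Fin k) ℝ) (hW1 : ∀ i j, 0 < W1 i j)
    (X1 : ℕ → Matrix (Fin m) (Fin k) ℝ) (C : ℕ → Matrix (Fin k) (Fin l) ℝ)
    (B : ℕ → Matrix (Fin m) (Fin s) ℝ) (D : ℕ → Matrix (Fin s) (Fin l) ℝ)
    (mseq : ℕ → ℝ)
    (hm : ∀ p, mseq p = frob (Matrix.hadamard (A1 - X1 p) W1) ^ 2 +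
      frob (A2 - X1 p * C p - B p * D p) ^ 2)
    (heq1 : ∀ p, Matrix.hadamard (Matrix.hadamard (X1 (p + 1) - A1) W1) W1 =
      (A2 - X1 (p + 1) * C p - B p * D p) * (C p)ᵀ)
    (heq2 : ∀ p, (X1 (p + 1))ᵀ * (A2 - X1 (p + 1) * C (p + 1) - B p * D p) = 0)
    (heq3 : ∀ p, (A2 - X1 (p + 1) * C (p + 1) - B (p + 1) * D p) * (D p)ᵀ = 0)
    (heq4 : ∀ p, (B (p + 1))ᵀ * (A2 - X1 (p + 1) * C (p + 1) - B (p + 1) * D (p + 1)) = 0)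
    :
    ∀ p, mseq p - mseq (p + 1) =
      frob (Matrix.hadamard (X1 p - X1 (p + 1)) W1) ^ 2 +
      frob ((X1 p - X1 (p + 1)) * C p) ^ 2 +
      frob (X1 (p + 1) * (C p - C (p + 1))) ^ 2 +
      frob ((B p - B (p + 1)) * D p) ^ 2 +
      frob (B (p + 1) * (D p - D (p + 1))) ^ 2 := by
  intro p
  -- decompositions of the successive residuals
  have eA : Matrix.hadamard (A1 - X1 p) W1 =
      Matrix.hadamard (A1 - X1 (p + 1)) W1 - Matrix.hadamard (X1 p - X1 (p + 1)) W1 := by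
    ext i j
    simp only [Matrix.hadamard_apply, Matrix.sub_apply]
    ring
  have e0 : A2 - X1 p * C p - B p * D p =
      (A2 - X1 (p + 1) * C p - B p * D p) - (X1 p - X1 (p + 1)) * C p := by
    rw [Matrix.sub_mul]; abel
  have e1 : A2 - X1 (p + 1) * C p - B p * D p =
      (A2 - X1 (p + 1) * C (p + 1) - B p * D p) - X1 (p + 1) * (C p - C (p + 1)) := by
    rw [Matrix.mul_sub]; abel
  have e2 : A2 - X1 (p + 1) * C (p + 1) - B p * D p =
      (A2 - X1 (p + 1) * C (p + 1) - B (p + 1) * D p) - (B p - B (p + 1)) * D p := by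
    rw [Matrix.sub_mul]; abel
  have e3 : A2 - X1 (p + 1) * C (p + 1) - B (p + 1) * D p =
      (A2 - X1 (p + 1) * C (p + 1) - B (p + 1) * D (p + 1)) - B (p + 1) * (D p - D (p + 1)) := by
    rw [Matrix.mul_sub]; abel
  -- cross terms
  have c1 : ip (Matrix.hadamard (A1 - X1 (p + 1)) W1) (Matrix.hadamard (X1 p - X1 (p + 1)) W1) +
      ip (A2 - X1 (p + 1) * C p - B p * D p) ((X1 p - X1 (p + 1)) * C p) = 0 := by
    rw [ip_mul, ← heq1 p]
    unfold ip
    simp only [Matrix.hadamard_apply, Matrix.sub_apply]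
    rw [← Finset.sum_add_distrib]
    refine Finset.sum_eq_zero fun i _ => ?_
    rw [← Finset.sum_add_distrib]
    exact Finset.sum_eq_zero fun j _ => by ring
  have c2 : ip (A2 - X1 (p + 1) * C (p + 1) - B p * D p) (X1 (p + 1) * (C p - C (p + 1))) = 0 := by
    rw [ip_mul_left, heq2 p, ip_zero]
  have c3 : ip (A2 - X1 (p + 1) * C (p + 1) - B (p + 1) * D p) ((B p - B (p + 1)) * D p) = 0 := by
    rw [ip_mul, heq3 p, ip_zero]
  have c4 : ip (A2 - X1 (p + 1) * C (p + 1) - B (p + 1) * D (p + 1))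
      (B (p + 1) * (D p - D (p + 1))) = 0 := by
    rw [ip_mul_left, heq4 p, ip_zero]
  -- expansions
  have E1 := eA ▸ gnorm_sub (Matrix.hadamard (A1 - X1 (p + 1)) W1)
      (Matrix.hadamard (X1 p - X1 (p + 1)) W1)
  have E2 := e0 ▸ gnorm_sub (A2 - X1 (p + 1) * C p - B p * D p) ((X1 p - X1 (p + 1)) * C p)
  have E3 := e1 ▸ gnorm_sub (A2 - X1 (p + 1) * C (p + 1) - B p * D p)
      (X1 (p + 1) * (C p - C (p + 1)))
  have E4 := e2 ▸ gnorm_sub (A2 - X1 (p + 1) * C (p + 1) - B (p + 1) * D p)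
      ((B p - B (p + 1)) * D p)
  have E5 := e3 ▸ gnorm_sub (A2 - X1 (p + 1) * C (p + 1) - B (p + 1) * D (p + 1))
      (B (p + 1) * (D p - D (p + 1)))
  rw [hm p, hm (p + 1)]
  simp only [frob_sq_s12]
  linarith [E1, E2, E3, E4, E5, c1, c2, c3, c4]
end
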